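/- arXiv:2306.12976 — 6 statements merged into one kernel-verified Lean document; each statement's English description precedes it below -/
import Mathlib

section
/- Let p ∈ ℕ, ℓ > 0, J = [[0, I_p],[I_p, 0]]. On H = L²((0,2ℓ); ℂᵖ) let (Af)(x) = i ∫₀ˣ f(t) dt, let S ∈ B(H), and let Π(x) be a p×2p matrix function with entries in L²(0,2ℓ). Suppose the operator identity holds: for all f ∈ H and a.e. x, (ASf)(x) − (SA*f)(x) = i Π(x) J ∫₀^{2ℓ} Π(t)* f(t) dt. For 0 < ξ ≤ 2ℓ let P_ξ : L²((0,2ℓ); ℂᵖ) → L²((0,ξ); ℂᵖ) be the restriction operator (P_ξ* the extension by zero), and set A_ξ = P_ξ A P_ξ*, S_ξ = P_ξ S P_ξ*. Then (i) P_ξ A = A_ξ P_ξ, and (ii) for all f ∈ L²((0,ξ); ℂᵖ) and a.e. x ∈ (0,ξ): (A_ξ S_ξ f)(x) − (S_ξ A_ξ* f)(x) = i Π(x) J ∫₀^{ξ} Π(t)* f(t) dt. -/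
/-!
Restriction to `(0, ξ)` commutes with `A = i∫₀ˣ`, and extension by zero from `(0, ξ)`
intertwines `A_ξ* = -i∫ₓ^ξ` with `A* = -i∫ₓ^{2ℓ}`, because a function vanishing beyond `ξ`
has the same tail integrals over `(x, 2ℓ]` and `(x, ξ]`. So `A_ξ S_ξ - S_ξ A_ξ*` is the
compression `P_ξ (AS - SA*) P_ξ*`, and `Π* P_ξ* f` integrates over `(0, 2ℓ)` to the
integral of `Π* f` over `(0, ξ)`.
-/

open MeasureTheory Matrix Set

theorem setIntegral_comp_of_ae_eq_indicator {E F : Type*} [Zero E] [NormedAddCommGroup F]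
    [NormedSpace ℝ F] {φ : ℝ → E → F} (hφ : ∀ t, φ t 0 = 0)
    {f g : ℝ → E} {s u v : Set ℝ} (hs : MeasurableSet s) (hvu : v ⊆ u)
    (hg : g =ᵐ[volume.restrict u] s.indicator f) :
    ∫ t in v, φ t (g t) = ∫ t in v ∩ s, φ t (f t) := by
  have hφg : (fun t => φ t (g t)) =ᵐ[volume.restrict v] s.indicator fun t => φ t (f t) := by
    filter_upwards [ae_restrict_of_ae_restrict_of_subset hvu hg] with t ht
    by_cases hts : t ∈ s <;> simp [ht, hts, hφ]
  rw [integral_congr_ae hφg, setIntegral_indicator hs]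

section

variable {E : Type*} [NormedAddCommGroup E] [NormedSpace ℝ E]

theorem setIntegral_indicator_of_subset {s t : Set ℝ} (hst : s ⊆ t) (ht : MeasurableSet t)
    (f : ℝ → E) : ∫ x in s, t.indicator f x = ∫ x in s, f x := by
  rw [setIntegral_indicator ht, inter_eq_left.mpr hst]

theorem setIntegral_Ioc_of_ae_eq_indicator {f g : ℝ → E} {ξ L t : ℝ} (hξL : ξ ≤ L)
    (ht : 0 ≤ t) (hg : g =ᵐ[volume.restrict (Ioc 0 L)] (Ioc 0 ξ).indicator f) :
    ∫ s in Ioc t L, g s = ∫ s in Ioc t ξ, f s := by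
  calc ∫ s in Ioc t L, g s = ∫ s in Ioc t L ∩ Ioc 0 ξ, f s :=
        setIntegral_comp_of_ae_eq_indicator (φ := fun _ => id) (fun _ => rfl) measurableSet_Ioc
          (Ioc_subset_Ioc_left ht) hg
    _ = ∫ s in Ioc t ξ, f s := by rw [Ioc_inter_Ioc, max_eq_left ht, min_eq_right hξL]

theorem indicator_Ioc_smul_setIntegral_Ioc {𝕜 : Type*} [SMulZeroClass 𝕜 E] (c : 𝕜)
    (f : ℝ → E) {ξ t : ℝ} (ht : 0 < t) :
    (Ioc 0 ξ).indicator (fun t => c • ∫ s in Ioc t ξ, f s) t = c • ∫ s in Ioc t ξ, f s := by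
  rw [indicator_apply_eq_self]
  intro htξ
  rw [Ioc_eq_empty fun hlt => htξ ⟨ht, hlt.le⟩, Measure.restrict_empty, integral_zero_measure,
    smul_zero]

end

theorem operator_identity_reduction_general
    (p : ℕ) (ℓ ξ : ℝ) (hξℓ : ξ ≤ 2*ℓ)
    (J : Matrix (Fin p ⊕ Fin p) (Fin p ⊕ Fin p) ℂ)
    (Pm : ℝ → Matrix (Fin p) (Fin p ⊕ Fin p) ℂ)
    (S : Lp (Fin p → ℂ) 2 (volume.restrict (Set.Ioc (0:ℝ) (2*ℓ)))
      →L[ℂ] Lp (Fin p → ℂ) 2 (volume.restrict (Set.Ioc (0:ℝ) (2*ℓ))))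
    -- the operator identity AS - SA* = iΠJΠ* on L²((0,2ℓ);ℂᵖ):
    (hid : ∀ f fa : Lp (Fin p → ℂ) 2 (volume.restrict (Set.Ioc (0:ℝ) (2*ℓ))),
      (⇑fa =ᵐ[volume.restrict (Set.Ioc (0:ℝ) (2*ℓ))]
        fun t => (-Complex.I) • ∫ s in Set.Ioc t (2*ℓ), f s) →
      ∀ᵐ x ∂(volume.restrict (Set.Ioc (0:ℝ) (2*ℓ))),
        (Complex.I • ∫ t in Set.Ioc (0:ℝ) x, S f t) - S fa x
          = Complex.I • (Pm x * J).mulVec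
              (∫ t in Set.Ioc (0:ℝ) (2*ℓ), (Pm t)ᴴ.mulVec (f t))) :
    -- (i) P_ξ A = A_ξ P_ξ
    (∀ f : Lp (Fin p → ℂ) 2 (volume.restrict (Set.Ioc (0:ℝ) (2*ℓ))),
      ∀ᵐ x ∂(volume.restrict (Set.Ioc (0:ℝ) ξ)),
        (Complex.I • ∫ t in Set.Ioc (0:ℝ) x, f t)
          = Complex.I • ∫ t in Set.Ioc (0:ℝ) x, (Set.Ioc (0:ℝ) ξ).indicator (⇑f) t) ∧
    -- (ii) A_ξ S_ξ - S_ξ A_ξ* = i P_ξ Π J Π* P_ξ*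
    (∀ f : Lp (Fin p → ℂ) 2 (volume.restrict (Set.Ioc (0:ℝ) ξ)),
      ∀ g ga : Lp (Fin p → ℂ) 2 (volume.restrict (Set.Ioc (0:ℝ) (2*ℓ))),
      (⇑g =ᵐ[volume.restrict (Set.Ioc (0:ℝ) (2*ℓ))] (Set.Ioc (0:ℝ) ξ).indicator (⇑f)) →
      (⇑ga =ᵐ[volume.restrict (Set.Ioc (0:ℝ) (2*ℓ))]
        (Set.Ioc (0:ℝ) ξ).indicator (fun t => (-Complex.I) • ∫ s in Set.Ioc t ξ, f s)) →
      ∀ᵐ x ∂(volume.restrict (Set.Ioc (0:ℝ) ξ)),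
        (Complex.I • ∫ t in Set.Ioc (0:ℝ) x, (Set.Ioc (0:ℝ) ξ).indicator (⇑(S g)) t)
            - (Set.Ioc (0:ℝ) ξ).indicator (⇑(S ga)) x
          = Complex.I • (Pm x * J).mulVec
              (∫ t in Set.Ioc (0:ℝ) ξ, (Pm t)ᴴ.mulVec (f t))) := by
  refine ⟨fun f => ?_, fun f g ga hg hga => ?_⟩
  · filter_upwards [ae_restrict_mem measurableSet_Ioc] with x hx
    rw [setIntegral_indicator_of_subset (Ioc_subset_Ioc_right hx.2) measurableSet_Ioc]
  have hAdjoint : ⇑ga =ᵐ[volume.restrict (Ioc (0:ℝ) (2*ℓ))]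
      fun t => (-Complex.I) • ∫ s in Ioc t (2*ℓ), g s := by
    filter_upwards [hga, ae_restrict_mem measurableSet_Ioc] with t hgat ht
    rw [hgat, indicator_Ioc_smul_setIntegral_Ioc _ _ ht.1,
      setIntegral_Ioc_of_ae_eq_indicator hξℓ ht.1.le hg]
  have hPiStar : ∫ t in Ioc (0:ℝ) (2*ℓ), (Pm t)ᴴ *ᵥ g t
      = ∫ t in Ioc (0:ℝ) ξ, (Pm t)ᴴ *ᵥ f t := by
    rw [setIntegral_comp_of_ae_eq_indicator (fun t => mulVec_zero _) measurableSet_Ioc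
      subset_rfl hg, inter_eq_right.mpr (Ioc_subset_Ioc_right hξℓ)]
  filter_upwards [ae_restrict_of_ae_restrict_of_subset (Ioc_subset_Ioc_right hξℓ)
    (hid g ga hAdjoint), ae_restrict_mem measurableSet_Ioc] with x hx hxξ
  rw [indicator_of_mem hxξ,
    setIntegral_indicator_of_subset (Ioc_subset_Ioc_right hxξ.2) measurableSet_Ioc, ← hPiStar]
  exact hx

/-- **Formula (3.14-) of the paper.**  On `H = L²((0,2ℓ);ℂᵖ)` let `A = i∫₀ˣ·dt` and let
`S ∈ B(H)` satisfy the operator identity `AS - SA* = iΠJΠ*`, where `Π(x)` is a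
`p × 2p` matrix function with square-integrable entries.  With `P_ξ` the restriction to
`(0,ξ)` (whose adjoint `P_ξ*` is extension by zero), `A_ξ = P_ξ A P_ξ*` and
`S_ξ = P_ξ S P_ξ*`, one has: (i) `P_ξ A = A_ξ P_ξ`, and (ii)
`A_ξ S_ξ - S_ξ A_ξ* = i P_ξ Π J Π* P_ξ*`. -/
theorem operator_identity_reduction
    (p : ℕ) (ℓ ξ : ℝ) (hℓ : 0 < ℓ) (hξ : 0 < ξ) (hξℓ : ξ ≤ 2*ℓ)
    (J : Matrix (Fin p ⊕ Fin p) (Fin p ⊕ Fin p) ℂ)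
    (hJ : J = Matrix.fromBlocks 0 1 1 0)
    (Pm : ℝ → Matrix (Fin p) (Fin p ⊕ Fin p) ℂ)
    (hPm : ∀ i k, MemLp (fun x => Pm x i k) 2 (volume.restrict (Set.Ioc (0:ℝ) (2*ℓ))))
    (S : Lp (Fin p → ℂ) 2 (volume.restrict (Set.Ioc (0:ℝ) (2*ℓ)))
      →L[ℂ] Lp (Fin p → ℂ) 2 (volume.restrict (Set.Ioc (0:ℝ) (2*ℓ))))
    -- the operator identity AS - SA* = iΠJΠ* on L²((0,2ℓ);ℂᵖ):
    (hid : ∀ f fa : Lp (Fin p → ℂ) 2 (volume.restrict (Set.Ioc (0:ℝ) (2*ℓ))),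
      (⇑fa =ᵐ[volume.restrict (Set.Ioc (0:ℝ) (2*ℓ))]
        fun t => (-Complex.I) • ∫ s in Set.Ioc t (2*ℓ), f s) →
      ∀ᵐ x ∂(volume.restrict (Set.Ioc (0:ℝ) (2*ℓ))),
        (Complex.I • ∫ t in Set.Ioc (0:ℝ) x, S f t) - S fa x
          = Complex.I • (Pm x * J).mulVec
              (∫ t in Set.Ioc (0:ℝ) (2*ℓ), (Pm t)ᴴ.mulVec (f t))) :
    -- (i) P_ξ A = A_ξ P_ξ
    (∀ f : Lp (Fin p → ℂ) 2 (volume.restrict (Set.Ioc (0:ℝ) (2*ℓ))),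
      ∀ᵐ x ∂(volume.restrict (Set.Ioc (0:ℝ) ξ)),
        (Complex.I • ∫ t in Set.Ioc (0:ℝ) x, f t)
          = Complex.I • ∫ t in Set.Ioc (0:ℝ) x, (Set.Ioc (0:ℝ) ξ).indicator (⇑f) t) ∧
    -- (ii) A_ξ S_ξ - S_ξ A_ξ* = i P_ξ Π J Π* P_ξ*
    (∀ f : Lp (Fin p → ℂ) 2 (volume.restrict (Set.Ioc (0:ℝ) ξ)),
      ∀ g ga : Lp (Fin p → ℂ) 2 (volume.restrict (Set.Ioc (0:ℝ) (2*ℓ))),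
      (⇑g =ᵐ[volume.restrict (Set.Ioc (0:ℝ) (2*ℓ))] (Set.Ioc (0:ℝ) ξ).indicator (⇑f)) →
      (⇑ga =ᵐ[volume.restrict (Set.Ioc (0:ℝ) (2*ℓ))]
        (Set.Ioc (0:ℝ) ξ).indicator (fun t => (-Complex.I) • ∫ s in Set.Ioc t ξ, f s)) →
      ∀ᵐ x ∂(volume.restrict (Set.Ioc (0:ℝ) ξ)),
        (Complex.I • ∫ t in Set.Ioc (0:ℝ) x, (Set.Ioc (0:ℝ) ξ).indicator (⇑(S g)) t)
            - (Set.Ioc (0:ℝ) ξ).indicator (⇑(S ga)) x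
          = Complex.I • (Pm x * J).mulVec
              (∫ t in Set.Ioc (0:ℝ) ξ, (Pm t)ᴴ.mulVec (f t))) :=
  operator_identity_reduction_general p ℓ ξ hξℓ J Pm S hid
end

section
/- Let ℓ > 0, let 0 < ε < T₁, 0 < ε < T₂, set Γ = (−T₁, −ε) ∪ (ε, T₂) ⊂ ℝ, and let μ be a finite positive Borel measure on ℝ. On L²((0,2ℓ); ℂ) define: (Af)(x) = i ∫₀ˣ f(t) dt, (A*f)(x) = −i ∫ₓ^{2ℓ} f(t) dt, (Ŝf)(x) = ∫_Γ e^{itx} ( ∫₀^{2ℓ} e^{−itξ} f(ξ) dξ ) dμ(t), and Φ̂₁(x) = −i ∫_Γ ( (e^{itx} − 1)/t + t/(t² + 1) ) dμ(t). Then Ŝ is a bounded operator and for every f ∈ L²((0,2ℓ); ℂ) and a.e. x ∈ (0,2ℓ): (AŜf)(x) − (ŜA*f)(x) = i ( Φ̂₁(x) ∫₀^{2ℓ} f(ξ) dξ + ∫₀^{2ℓ} conj(Φ̂₁(ξ)) f(ξ) dξ ). -/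
/-!
Write `e_t(x) = e^{itx}` and `⟨f, h⟩ = ∫₀^{2ℓ} conj(h) f`. Then `Ŝ = ∫_Γ e_t ⟨·, e_t⟩ dμ(t)` is a
superposition of rank-one operators, and the identity is proved for each `t ∈ Γ` and integrated.
For `t ≠ 0` one has `A e_t = φ_t := (e_t - 1)/t`, and `⟨A^* f, e_t⟩ = ⟨f, φ_t⟩` by Fubini on the
triangle `ξ < s`. Since `e_t = t φ_t + 1`, the rank-one commutator telescopes:
`φ_t(x) ⟨f, e_t⟩ - e_t(x) ⟨f, φ_t⟩ = φ_t(x) ⟨f, 1⟩ - ⟨f, φ_t⟩`,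
which is the `t`-integrand of the right-hand side (the real term `t/(t²+1)` cancels). All kernels
are bounded on `(0, 2ℓ)`, as `|φ_t(x)| ≤ |x|`, which justifies every use of Fubini.
Boundedness of `Ŝ` comes from the pointwise bound `|Ŝf| ≤ μ(Γ) ‖f‖₁`.
-/

open MeasureTheory Set

noncomputable section

/-- The operator `(Ŝf)(x) = ∫_Γ e^{itx} (∫₀^{2ℓ} e^{-itξ} f(ξ) dξ) dμ(t)`. -/
def Shat (ℓ : ℝ) (Γ : Set ℝ) (μ : MeasureTheory.Measure ℝ) (f : ℝ → ℂ) (x : ℝ) : ℂ :=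
  ∫ t in Γ, Complex.exp (Complex.I * t * x)
    * (∫ ξ in Set.Ioc (0:ℝ) (2*ℓ), Complex.exp (-(Complex.I * t * ξ)) * f ξ) ∂μ

/-- The function `Φ̂₁(x) = -i∫_Γ ((e^{itx}-1)/t + t/(t²+1)) dμ(t)`. -/
def Phihat (Γ : Set ℝ) (μ : MeasureTheory.Measure ℝ) (x : ℝ) : ℂ :=
  -Complex.I * ∫ t in Γ, ((Complex.exp (Complex.I * t * x) - 1) / t + t / (t^2 + 1)) ∂μ

open Complex Function ComplexConjugate
open scoped ENNReal

section

variable {α β : Type*} [MeasurableSpace α] [MeasurableSpace β] {μ : Measure α} {ν : Measure β}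

theorem integrable_prod_mul_of_norm_le {𝕜 : Type*} [NormedRing 𝕜] [IsFiniteMeasure μ] [SFinite ν]
    {k : α → β → 𝕜} (hk : AEStronglyMeasurable (fun p : α × β => k p.1 p.2) (μ.prod ν)) {C : ℝ}
    (hkC : ∀ᵐ b ∂ν, ∀ a, ‖k a b‖ ≤ C) {f : β → 𝕜} (hf : Integrable f ν) :
    Integrable (uncurry fun a b => k a b * f b) (μ.prod ν) := by
  simpa only [one_mul, uncurry_def] using ((integrable_const (1 : 𝕜)).mul_prod hf).bdd_mul hk
    ((Measure.quasiMeasurePreserving_snd.ae hkC).mono fun p hp => hp p.1)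

theorem integrable_integral_mul_of_norm_le {𝕜 : Type*} [NormedRing 𝕜] [NormedSpace ℝ 𝕜]
    [IsFiniteMeasure μ] [SFinite ν]
    {k : α → β → 𝕜} (hk : AEStronglyMeasurable (fun p : α × β => k p.1 p.2) (μ.prod ν)) {C : ℝ}
    (hkC : ∀ᵐ b ∂ν, ∀ a, ‖k a b‖ ≤ C) {f : β → 𝕜} (hf : Integrable f ν) :
    Integrable (fun a => ∫ b, k a b * f b ∂ν) μ :=
  (integrable_prod_mul_of_norm_le hk hkC hf).integral_prod_left

theorem ae_restrict_ne_of_notMem [MeasurableSingletonClass α] {s : Set α} {a : α} (ha : a ∉ s) :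
    ∀ᵐ x ∂μ.restrict s, x ≠ a := by
  rw [ae_iff, Measure.restrict_apply (by simp)]
  simp [ha]

theorem enorm_integral_mul_le_eLpNorm_one {k g : α → ℂ} (hk : ∀ y, ‖k y‖ ≤ 1) :
    ‖∫ y, k y * g y ∂μ‖ₑ ≤ eLpNorm g 1 μ := by
  rw [eLpNorm_one_eq_lintegral_enorm]
  refine (enorm_integral_le_lintegral_enorm _).trans (lintegral_mono fun y => ?_)
  rw [enorm_mul]
  exact mul_le_of_le_one_left' (by rw [← ofReal_norm]; exact ENNReal.ofReal_le_one.2 (hk y))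

theorem eLpNorm_two_le_of_enorm_le_mul_eLpNorm_one {E F : Type*} [NormedAddCommGroup E]
    [NormedAddCommGroup F] {h : α → E} {f : α → F} (hf : AEStronglyMeasurable f μ) {C : ℝ≥0∞}
    (hh : ∀ᵐ x ∂μ, ‖h x‖ₑ ≤ C * eLpNorm f 1 μ) :
    eLpNorm h 2 μ ≤ μ univ * C * eLpNorm f 2 μ := by
  have h12 := eLpNorm_le_eLpNorm_mul_rpow_measure_univ (p := 1) (q := 2) one_le_two hf
  norm_num at h12
  calc eLpNorm h 2 μ ≤ (C * eLpNorm f 1 μ) • μ univ ^ (2 : ℝ≥0∞).toReal⁻¹ :=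
        eLpNorm_le_of_ae_enorm_bound hh
    _ ≤ C * (eLpNorm f 2 μ * μ univ ^ (2⁻¹ : ℝ)) * μ univ ^ (2⁻¹ : ℝ) := by
        norm_num
        gcongr
    _ = μ univ * C * eLpNorm f 2 μ := by
        rw [mul_assoc, mul_assoc, ← ENNReal.rpow_add_of_nonneg _ _ (by norm_num) (by norm_num)]
        norm_num
        ring

end

theorem norm_exp_I_mul_ofReal_mul_ofReal (t u : ℝ) : ‖exp (I * t * u)‖ = 1 := by
  rw [norm_exp]; simp

theorem norm_exp_neg_I_mul_ofReal_mul_ofReal (t u : ℝ) : ‖exp (-(I * t * u))‖ = 1 := by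
  rw [norm_exp]; simp

theorem norm_exp_I_mul_sub_one_div_le (t x : ℝ) : ‖(exp (I * t * x) - 1) / t‖ ≤ |x| := by
  rcases eq_or_ne t 0 with rfl | ht
  · simp
  rw [norm_div, div_le_iff₀ (by simpa using ht), mul_assoc, ← ofReal_mul]
  simpa [abs_mul, mul_comm] using Real.norm_exp_I_mul_ofReal_sub_one_le (x := t * x)

theorem norm_exp_neg_I_mul_sub_one_div_le (t x : ℝ) : ‖(exp (-(I * t * x)) - 1) / t‖ ≤ |x| := by
  simpa using norm_exp_I_mul_sub_one_div_le t (-x)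

theorem norm_ofReal_div_sq_add_one_le (t : ℝ) : ‖(t : ℂ) / (t ^ 2 + 1)‖ ≤ 1 := by
  have h : (t : ℂ) / (t ^ 2 + 1) = ((t / (t ^ 2 + 1) : ℝ) : ℂ) := by push_cast; rfl
  rw [h, norm_real, Real.norm_eq_abs, abs_div, abs_of_pos (by positivity : (0:ℝ) < t ^ 2 + 1),
    div_le_one (by positivity)]
  nlinarith [sq_abs t, sq_nonneg (|t| - 1)]

theorem norm_exp_I_mul_sub_one_div_add_le (t x : ℝ) :
    ‖(exp (I * t * x) - 1) / t + t / (t ^ 2 + 1)‖ ≤ |x| + 1 :=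
  (norm_add_le _ _).trans
    (add_le_add (norm_exp_I_mul_sub_one_div_le t x) (norm_ofReal_div_sq_add_one_le t))

theorem norm_exp_neg_I_mul_sub_one_div_add_le (t x : ℝ) :
    ‖(exp (-(I * t * x)) - 1) / t + t / (t ^ 2 + 1)‖ ≤ |x| + 1 :=
  (norm_add_le _ _).trans
    (add_le_add (norm_exp_neg_I_mul_sub_one_div_le t x) (norm_ofReal_div_sq_add_one_le t))

theorem setIntegral_Ioc_exp_mul {c : ℂ} (hc : c ≠ 0) {x : ℝ} (hx : 0 ≤ x) :
    ∫ u in Ioc 0 x, exp (c * u) = (exp (c * x) - 1) / c := by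
  rw [← intervalIntegral.integral_of_le hx, integral_exp_mul_complex hc]; simp

theorem setIntegral_mul_integral_Ioc_swap {a b : ℝ} {f g : ℝ → ℂ}
    (hf : IntegrableOn f (Ioc a b)) (hg : IntegrableOn g (Ioc a b)) :
    ∫ ξ in Ioc a b, g ξ * ∫ s in Ioc ξ b, f s = ∫ s in Ioc a b, (∫ ξ in Ioc a s, g ξ) * f s := by
  set F : ℝ × ℝ → ℂ := {p | p.1 < p.2}.indicator fun p => g p.1 * f p.2
  have hF : Integrable F ((volume.restrict (Ioc a b)).prod (volume.restrict (Ioc a b))) :=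
    (hg.mul_prod hf).indicator (measurableSet_lt measurable_fst measurable_snd)
  have hleft : ∀ ξ ∈ Ioc a b, g ξ * ∫ s in Ioc ξ b, f s = ∫ s in Ioc a b, F (ξ, s) := by
    intro ξ hξ
    have : Ioc ξ b = Ioc a b ∩ Ioi ξ := by rw [Ioc_inter_Ioi, max_eq_right hξ.1.le]
    rw [← integral_const_mul, this, ← setIntegral_indicator measurableSet_Ioi]
    congr with s
  have hright : ∀ s ∈ Ioc a b, (∫ ξ in Ioc a s, g ξ) * f s = ∫ ξ in Ioc a b, F (ξ, s) := by
    intro s hs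
    have : Ioc a b ∩ Iio s = Ioo a s := by
      ext ξ
      simp only [mem_inter_iff, mem_Ioc, mem_Iio, mem_Ioo]
      constructor
      · rintro ⟨⟨h1, -⟩, h2⟩; exact ⟨h1, h2⟩
      · rintro ⟨h1, h2⟩; exact ⟨⟨h1, h2.le.trans hs.2⟩, h2⟩
    rw [← integral_mul_const, integral_Ioc_eq_integral_Ioo, ← this,
      ← setIntegral_indicator measurableSet_Iio]
    congr with ξ
  rw [setIntegral_congr_fun measurableSet_Ioc hleft, setIntegral_congr_fun measurableSet_Ioc hright]
  exact integral_integral_swap hF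

theorem I_mul_integral_Ioc_integral_exp_mul {ν : Measure ℝ} [SFinite ν] (hν : ∀ᵐ t ∂ν, t ≠ 0)
    {g : ℝ → ℂ} (hg : Integrable g ν) {x : ℝ} (hx : 0 ≤ x) :
    I * ∫ u in Ioc 0 x, ∫ t, exp (I * t * u) * g t ∂ν
      = ∫ t, (exp (I * t * x) - 1) / t * g t ∂ν := by
  have hint := integrable_prod_mul_of_norm_le (μ := volume.restrict (Ioc 0 x))
    (k := fun u t : ℝ => exp (I * t * u)) (by fun_prop)
    (ae_of_all _ fun t u => (norm_exp_I_mul_ofReal_mul_ofReal t u).le) hg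
  rw [integral_integral_swap hint, ← integral_const_mul]
  refine integral_congr_ae (hν.mono fun t ht => ?_)
  have hIt : I * t ≠ 0 := mul_ne_zero I_ne_zero (ofReal_ne_zero.2 ht)
  dsimp only
  rw [integral_mul_const, setIntegral_Ioc_exp_mul hIt hx]
  field_simp

theorem integral_exp_neg_mul_integral_Ioc {b t : ℝ} (ht : t ≠ 0) {f : ℝ → ℂ}
    (hf : IntegrableOn f (Ioc 0 b)) :
    ∫ ξ in Ioc 0 b, exp (-(I * t * ξ)) * (-I * ∫ s in Ioc ξ b, f s)
      = ∫ s in Ioc 0 b, (exp (-(I * t * s)) - 1) / t * f s := by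
  have hIt : -(I * t) ≠ 0 := neg_ne_zero.2 (mul_ne_zero I_ne_zero (ofReal_ne_zero.2 ht))
  have hexp : ∀ ξ : ℝ, exp (-(I * t * ξ)) = exp (-(I * t) * ξ) := fun ξ => by ring_nf
  simp_rw [← mul_assoc, mul_comm (exp _) (-I), hexp]
  rw [setIntegral_mul_integral_Ioc_swap hf (Continuous.integrableOn_Ioc (by fun_prop))]
  refine setIntegral_congr_fun measurableSet_Ioc fun s hs => ?_
  rw [integral_const_mul, setIntegral_Ioc_exp_mul hIt hs.1.le]
  field_simp

theorem integral_exp_neg_mul_eq {ν : Measure ℝ} {f : ℝ → ℂ} (hf : Integrable f ν) {t : ℝ}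
    (ht : t ≠ 0) :
    ∫ ξ, exp (-(I * t * ξ)) * f ξ ∂ν
      = t * ∫ ξ, (exp (-(I * t * ξ)) - 1) / t * f ξ ∂ν + ∫ ξ, f ξ ∂ν := by
  have hexp : Integrable (fun ξ : ℝ => exp (-(I * t * ξ)) * f ξ) ν :=
    hf.bdd_mul (by fun_prop)
      (ae_of_all _ fun (ξ : ℝ) => (norm_exp_neg_I_mul_ofReal_mul_ofReal t ξ).le)
  have hker : ∀ ξ : ℝ,
      t * ((exp (-(I * t * ξ)) - 1) / t * f ξ) = exp (-(I * t * ξ)) * f ξ - f ξ := fun ξ => by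
    rw [← mul_assoc, mul_div_cancel₀ _ (ofReal_ne_zero.2 ht), sub_mul, one_mul]
  simp_rw [← integral_const_mul, hker, integral_sub hexp hf, sub_add_cancel]

theorem commutator_integrand_eq {ν : Measure ℝ} {f : ℝ → ℂ} (hf : Integrable f ν) {t : ℝ}
    (ht : t ≠ 0) (x : ℝ)
    (hker : Integrable (fun ξ : ℝ => (exp (-(I * t * ξ)) - 1) / t * f ξ) ν) :
    (exp (I * t * x) - 1) / t * (∫ ξ, exp (-(I * t * ξ)) * f ξ ∂ν)
        - exp (I * t * x) * ∫ ξ, (exp (-(I * t * ξ)) - 1) / t * f ξ ∂ν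
      = ((exp (I * t * x) - 1) / t + t / (t ^ 2 + 1)) * (∫ ξ, f ξ ∂ν)
        - ∫ ξ, ((exp (-(I * t * ξ)) - 1) / t + t / (t ^ 2 + 1)) * f ξ ∂ν := by
  have hφ : (t : ℂ) * ((exp (I * t * x) - 1) / t) = exp (I * t * x) - 1 :=
    mul_div_cancel₀ _ (ofReal_ne_zero.2 ht)
  simp_rw [add_mul]
  rw [integral_add hker (hf.const_mul _), integral_const_mul, integral_exp_neg_mul_eq hf ht]
  linear_combination (∫ ξ, (exp (-(I * t * ξ)) - 1) / t * f ξ ∂ν) * hφ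

theorem conj_Phihat (Γ : Set ℝ) (μ : Measure ℝ) (ξ : ℝ) :
    conj (Phihat Γ μ ξ)
      = I * ∫ t in Γ, ((exp (-(I * t * ξ)) - 1) / t + t / (t ^ 2 + 1)) ∂μ := by
  rw [Phihat, map_mul, ← integral_conj]
  congr 1
  · simp
  · refine integral_congr_ae (ae_of_all _ fun t => ?_)
    simp [← exp_conj]

theorem integral_conj_Phihat_mul (Γ : Set ℝ) (μ : Measure ℝ) [IsFiniteMeasure μ] {b : ℝ}
    {f : ℝ → ℂ} (hf : IntegrableOn f (Ioc 0 b)) :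
    ∫ ξ in Ioc 0 b, conj (Phihat Γ μ ξ) * f ξ
      = I * ∫ t in Γ, (∫ ξ in Ioc 0 b,
          ((exp (-(I * t * ξ)) - 1) / t + t / (t ^ 2 + 1)) * f ξ) ∂μ := by
  have hint := integrable_prod_mul_of_norm_le (μ := μ.restrict Γ)
    (k := fun t ξ : ℝ => (exp (-(I * t * ξ)) - 1) / t + (t : ℂ) / (t ^ 2 + 1)) (by fun_prop)
    ((ae_restrict_mem measurableSet_Ioc).mono fun ξ hξ t =>
      (norm_exp_neg_I_mul_sub_one_div_add_le t ξ).trans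
        (by rw [abs_of_pos hξ.1]; linarith [hξ.2] : |ξ| + 1 ≤ b + 1)) hf
  have hpt : ∀ ξ : ℝ, conj (Phihat Γ μ ξ) * f ξ = I * ∫ t in Γ,
      ((exp (-(I * t * ξ)) - 1) / t + t / (t ^ 2 + 1)) * f ξ ∂μ := fun ξ => by
    rw [conj_Phihat, integral_mul_const, mul_assoc]
  simp_rw [hpt, integral_const_mul]
  exact congrArg _ (integral_integral_swap hint).symm

theorem I_mul_Phihat_mul_add_integral_conj_Phihat_mul (Γ : Set ℝ) (μ : Measure ℝ)
    [IsFiniteMeasure μ] {b : ℝ} {f : ℝ → ℂ} (hf : IntegrableOn f (Ioc 0 b)) (x : ℝ) :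
    I * (Phihat Γ μ x * (∫ ξ in Ioc 0 b, f ξ) + ∫ ξ in Ioc 0 b, conj (Phihat Γ μ ξ) * f ξ)
      = ∫ t in Γ, ((exp (I * t * x) - 1) / t + t / (t ^ 2 + 1)) * (∫ ξ in Ioc 0 b, f ξ) ∂μ
        - ∫ t in Γ, (∫ ξ in Ioc 0 b,
            ((exp (-(I * t * ξ)) - 1) / t + t / (t ^ 2 + 1)) * f ξ) ∂μ := by
  rw [integral_conj_Phihat_mul Γ μ hf, Phihat, integral_mul_const]
  linear_combination (∫ t in Γ, (∫ ξ in Ioc 0 b,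
      ((exp (-(I * t * ξ)) - 1) / t + t / (t ^ 2 + 1)) * f ξ) ∂μ
    - (∫ t in Γ, ((exp (I * t * x) - 1) / t + t / (t ^ 2 + 1)) ∂μ) * ∫ ξ in Ioc 0 b, f ξ) * I_sq

theorem I_mul_integral_Shat_sub_Shat_adjoint {ℓ : ℝ} {Γ : Set ℝ} (hΓ : (0 : ℝ) ∉ Γ)
    {μ : Measure ℝ} [IsFiniteMeasure μ] {f : ℝ → ℂ} (hf : IntegrableOn f (Ioc 0 (2 * ℓ)))
    {x : ℝ} (hx : 0 ≤ x) :
    I * (∫ t in Ioc 0 x, Shat ℓ Γ μ f t)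
        - Shat ℓ Γ μ (fun t => -I * ∫ s in Ioc t (2 * ℓ), f s) x
      = I * (Phihat Γ μ x * (∫ ξ in Ioc 0 (2 * ℓ), f ξ)
          + ∫ ξ in Ioc 0 (2 * ℓ), conj (Phihat Γ μ ξ) * f ξ) := by
  set J := Ioc (0 : ℝ) (2 * ℓ)
  set g : ℝ → ℂ := fun t => ∫ ξ in J, exp (-(I * t * ξ)) * f ξ
  set G : ℝ → ℂ := fun t => ∫ ξ in J, (exp (-(I * t * ξ)) - 1) / t * f ξ
  have ht0 : ∀ᵐ t ∂μ.restrict Γ, t ≠ 0 := ae_restrict_ne_of_notMem hΓ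
  have hJ : ∀ᵐ ξ ∂volume.restrict J, |ξ| ≤ 2 * ℓ :=
    (ae_restrict_mem measurableSet_Ioc).mono fun ξ hξ => (abs_of_pos hξ.1).trans_le hξ.2
  have hg : Integrable g (μ.restrict Γ) := integrable_integral_mul_of_norm_le (by fun_prop)
    (ae_of_all _ fun ξ t => (norm_exp_neg_I_mul_ofReal_mul_ofReal t ξ).le) hf
  have hG : Integrable G (μ.restrict Γ) :=
    integrable_integral_mul_of_norm_le (Measurable.aestronglyMeasurable (by fun_prop))
      (hJ.mono fun ξ hξ t => (norm_exp_neg_I_mul_sub_one_div_le t ξ).trans hξ) hf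
  have hAS : I * ∫ u in Ioc 0 x, Shat ℓ Γ μ f u = ∫ t in Γ, (exp (I * t * x) - 1) / t * g t ∂μ :=
    I_mul_integral_Ioc_integral_exp_mul ht0 hg hx
  have hSA : Shat ℓ Γ μ (fun t => -I * ∫ s in Ioc t (2 * ℓ), f s) x
      = ∫ t in Γ, exp (I * t * x) * G t ∂μ :=
    integral_congr_ae (ht0.mono fun t ht => congrArg _ (integral_exp_neg_mul_integral_Ioc ht hf))
  rw [hAS, hSA,
    I_mul_Phihat_mul_add_integral_conj_Phihat_mul Γ μ hf x,
    ← integral_sub (hg.bdd_mul (Measurable.aestronglyMeasurable (by fun_prop))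
        (ae_of_all _ fun t => norm_exp_I_mul_sub_one_div_le t x))
      (hG.bdd_mul (by fun_prop) (ae_of_all _ fun t => (norm_exp_I_mul_ofReal_mul_ofReal t x).le)),
    ← integral_sub ((integrable_const _).bdd_mul (Measurable.aestronglyMeasurable (by fun_prop))
        (ae_of_all _ fun t => norm_exp_I_mul_sub_one_div_add_le t x))
      (integrable_integral_mul_of_norm_le (Measurable.aestronglyMeasurable (by fun_prop))
        (hJ.mono fun ξ hξ t => (norm_exp_neg_I_mul_sub_one_div_add_le t ξ).trans
          (add_le_add_left hξ 1)) hf)]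
  refine integral_congr_ae (ht0.mono fun t ht => commutator_integrand_eq hf ht x ?_)
  exact hf.bdd_mul (Measurable.aestronglyMeasurable (by fun_prop))
    (hJ.mono fun ξ hξ => (norm_exp_neg_I_mul_sub_one_div_le t ξ).trans hξ)

theorem enorm_Shat_le (ℓ : ℝ) (Γ : Set ℝ) (μ : Measure ℝ) (f : ℝ → ℂ) (x : ℝ) :
    ‖Shat ℓ Γ μ f x‖ₑ ≤ μ Γ * eLpNorm f 1 (volume.restrict (Ioc 0 (2 * ℓ))) := by
  refine (enorm_integral_mul_le_eLpNorm_one fun t =>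
    (norm_exp_I_mul_ofReal_mul_ofReal t x).le).trans ?_
  refine (eLpNorm_le_of_ae_enorm_bound (ae_of_all _ fun t => enorm_integral_mul_le_eLpNorm_one
    fun ξ => (norm_exp_neg_I_mul_ofReal_mul_ofReal t ξ).le)).trans_eq ?_
  simp [mul_comm]

theorem aestronglyMeasurable_Shat {ℓ : ℝ} {Γ : Set ℝ} {μ : Measure ℝ} [SFinite μ] {f : ℝ → ℂ}
    (hf : AEStronglyMeasurable f (volume.restrict (Ioc 0 (2 * ℓ)))) (ν : Measure ℝ) :
    AEStronglyMeasurable (Shat ℓ Γ μ f) ν := by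
  have hg : AEStronglyMeasurable (fun t : ℝ => ∫ ξ in Ioc 0 (2 * ℓ), exp (-(I * t * ξ)) * f ξ)
      (μ.restrict Γ) :=
    AEStronglyMeasurable.integral_prod_right'
      ((continuous_exp.comp (by fun_prop : Continuous fun p : ℝ × ℝ => -(I * p.1 * p.2))
        ).aestronglyMeasurable.mul hf.comp_snd)
  exact AEStronglyMeasurable.integral_prod_right'
    ((continuous_exp.comp (by fun_prop : Continuous fun p : ℝ × ℝ => I * p.2 * p.1)
      ).aestronglyMeasurable.mul hg.comp_snd)

theorem memLp_Shat_and_eLpNorm_le {ℓ : ℝ} {Γ : Set ℝ} {μ : Measure ℝ} [IsFiniteMeasure μ]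
    {f : ℝ → ℂ} (hf : MemLp f 2 (volume.restrict (Ioc 0 (2 * ℓ)))) :
    MemLp (Shat ℓ Γ μ f) 2 (volume.restrict (Ioc 0 (2 * ℓ))) ∧
      eLpNorm (Shat ℓ Γ μ f) 2 (volume.restrict (Ioc 0 (2 * ℓ)))
        ≤ volume (Ioc (0 : ℝ) (2 * ℓ)) * μ Γ * eLpNorm f 2 (volume.restrict (Ioc 0 (2 * ℓ))) := by
  have hle := eLpNorm_two_le_of_enorm_le_mul_eLpNorm_one hf.1 (ae_of_all _ (enorm_Shat_le ℓ Γ μ f))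
  rw [Measure.restrict_apply_univ] at hle
  refine ⟨⟨aestronglyMeasurable_Shat hf.1 _, hle.trans_lt ?_⟩, hle⟩
  exact ENNReal.mul_lt_top (ENNReal.mul_lt_top measure_Ioc_lt_top (measure_lt_top μ Γ)) hf.2

theorem truncated_operator_identity_general
    (ℓ ε T₁ T₂ : ℝ) (hε : 0 < ε)
    (μ : MeasureTheory.Measure ℝ) [IsFiniteMeasure μ]
    (Γ : Set ℝ) (hΓ : Γ = Set.Ioo (-T₁) (-ε) ∪ Set.Ioo ε T₂) :
    -- Ŝ is a bounded operator on L²((0,2ℓ);ℂ)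
    (∃ C : ℝ, ∀ f : ℝ → ℂ, MemLp f 2 (volume.restrict (Set.Ioc (0:ℝ) (2*ℓ))) →
      MemLp (Shat ℓ Γ μ f) 2 (volume.restrict (Set.Ioc (0:ℝ) (2*ℓ))) ∧
      eLpNorm (Shat ℓ Γ μ f) 2 (volume.restrict (Set.Ioc (0:ℝ) (2*ℓ)))
        ≤ ENNReal.ofReal C * eLpNorm f 2 (volume.restrict (Set.Ioc (0:ℝ) (2*ℓ)))) ∧
    -- the identity AŜ - ŜA* = i(Φ̂₁Φ₂* + Φ₂Φ̂₁*)
    (∀ f : ℝ → ℂ, MemLp f 2 (volume.restrict (Set.Ioc (0:ℝ) (2*ℓ))) →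
      ∀ᵐ x ∂(volume.restrict (Set.Ioc (0:ℝ) (2*ℓ))),
        Complex.I * (∫ t in Set.Ioc (0:ℝ) x, Shat ℓ Γ μ f t)
            - Shat ℓ Γ μ (fun t => -Complex.I * ∫ s in Set.Ioc t (2*ℓ), f s) x
          = Complex.I * (Phihat Γ μ x * (∫ ξ in Set.Ioc (0:ℝ) (2*ℓ), f ξ)
              + ∫ ξ in Set.Ioc (0:ℝ) (2*ℓ), (starRingEnd ℂ) (Phihat Γ μ ξ) * f ξ)) := by
  have hΓ0 : (0 : ℝ) ∉ Γ := by
    rw [hΓ]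
    rintro (⟨-, h⟩ | ⟨h, -⟩) <;> linarith
  refine ⟨⟨(volume (Ioc (0 : ℝ) (2 * ℓ))).toReal * (μ Γ).toReal, fun f hf => ?_⟩, fun f hf => ?_⟩
  · rw [ENNReal.ofReal_mul ENNReal.toReal_nonneg, ENNReal.ofReal_toReal measure_Ioc_lt_top.ne,
      ENNReal.ofReal_toReal (measure_ne_top μ Γ)]
    exact memLp_Shat_and_eLpNorm_le hf
  · filter_upwards [ae_restrict_mem measurableSet_Ioc] with x hx
    exact I_mul_integral_Shat_sub_Shat_adjoint hΓ0 (hf.integrable one_le_two) hx.1.le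

/-- **The truncated operator identity (C8) of the paper** (scalar case `p = 1`).
For `Γ = (-T₁,-ε) ∪ (ε,T₂)` and a finite positive Borel measure `μ`, the operator `Ŝ`
is bounded on `L²((0,2ℓ);ℂ)` and satisfies
`AŜ - ŜA* = i(Φ̂₁Φ₂* + Φ₂Φ̂₁*)`, i.e. for every `f ∈ L²((0,2ℓ);ℂ)` and a.e.
`x ∈ (0,2ℓ)`:
`(AŜf)(x) - (ŜA*f)(x) = i(Φ̂₁(x)∫₀^{2ℓ}f + ∫₀^{2ℓ} conj(Φ̂₁(ξ))f(ξ)dξ)`. -/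
theorem truncated_operator_identity
    (ℓ ε T₁ T₂ : ℝ) (hℓ : 0 < ℓ) (hε : 0 < ε) (hT₁ : ε < T₁) (hT₂ : ε < T₂)
    (μ : MeasureTheory.Measure ℝ) [IsFiniteMeasure μ]
    (Γ : Set ℝ) (hΓ : Γ = Set.Ioo (-T₁) (-ε) ∪ Set.Ioo ε T₂) :
    -- Ŝ is a bounded operator on L²((0,2ℓ);ℂ)
    (∃ C : ℝ, ∀ f : ℝ → ℂ, MemLp f 2 (volume.restrict (Set.Ioc (0:ℝ) (2*ℓ))) →
      MemLp (Shat ℓ Γ μ f) 2 (volume.restrict (Set.Ioc (0:ℝ) (2*ℓ))) ∧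
      eLpNorm (Shat ℓ Γ μ f) 2 (volume.restrict (Set.Ioc (0:ℝ) (2*ℓ)))
        ≤ ENNReal.ofReal C * eLpNorm f 2 (volume.restrict (Set.Ioc (0:ℝ) (2*ℓ)))) ∧
    -- the identity AŜ - ŜA* = i(Φ̂₁Φ₂* + Φ₂Φ̂₁*)
    (∀ f : ℝ → ℂ, MemLp f 2 (volume.restrict (Set.Ioc (0:ℝ) (2*ℓ))) →
      ∀ᵐ x ∂(volume.restrict (Set.Ioc (0:ℝ) (2*ℓ))),
        Complex.I * (∫ t in Set.Ioc (0:ℝ) x, Shat ℓ Γ μ f t)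
            - Shat ℓ Γ μ (fun t => -Complex.I * ∫ s in Set.Ioc t (2*ℓ), f s) x
          = Complex.I * (Phihat Γ μ x * (∫ ξ in Set.Ioc (0:ℝ) (2*ℓ), f ξ)
              + ∫ ξ in Set.Ioc (0:ℝ) (2*ℓ), (starRingEnd ℂ) (Phihat Γ μ ξ) * f ξ)) :=
  truncated_operator_identity_general ℓ ε T₁ T₂ hε μ Γ hΓ
end
end

section
/- Let μ be a positive Borel measure on ℝ, let ℓ > 0 and M ≥ 0, and suppose that for every f ∈ L²((0,2ℓ); ℂ): ∫_ℝ | ∫₀^{2ℓ} e^{−iηt} f(η) dη |² dμ(t) ≤ M ∫₀^{2ℓ} |f(η)|² dη. Then for every k ∈ ℕ and every f ∈ L²((0,2kℓ); ℂ): ∫_ℝ | ∫₀^{2kℓ} e^{−iηt} f(η) dη |² dμ(t) ≤ k² M ∫₀^{2kℓ} |f(η)|² dη. -/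
/-!
Split `(0, 2kℓ]` into the `k` translates `(2jℓ, 2(j+1)ℓ]` of `(0, 2ℓ]`. Translating `f` by `2jℓ`
only multiplies its Fourier integral by the unimodular factor `e^{-2ijℓt}`, so the Fourier integral
over the long interval is a sum of `k` Fourier integrals over `(0, 2ℓ]`. Cauchy–Schwarz bounds the
square of that sum by `k` times the sum of squares; applying the hypothesis to each translate and
summing gives the constant `kM ≤ k²M`.
-/

open MeasureTheory Set Complex
open scoped ENNReal

-- Unlike `Real.fourierIntegral`, there is no factor `2π` in the exponent.
noncomputable def fourierIntegralAgainst (ν : Measure ℝ) (f : ℝ → ℂ) (t : ℝ) : ℂ :=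
  ∫ η, cexp (-(I * η * t)) * f η ∂ν

def HasFourierBound (μ ν : Measure ℝ) (C : ℝ≥0∞) : Prop :=
  ∀ f : ℝ → ℂ, MemLp f 2 ν →
    ∫⁻ t, ‖fourierIntegralAgainst ν f t‖ₑ ^ 2 ∂μ ≤ C * ∫⁻ η, ‖f η‖ₑ ^ 2 ∂ν

lemma norm_cexp_neg_I_mul_ofReal_mul_ofReal (a b : ℝ) : ‖cexp (-(I * a * b))‖ = 1 := by
  rw [show -(I * a * b) = ((-(a * b) : ℝ) : ℂ) * I by push_cast; ring, norm_exp_ofReal_mul_I]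

lemma enorm_sum_sq_le_card_mul_sum_enorm_sq {ι E : Type*} [SeminormedAddCommGroup E]
    (s : Finset ι) (x : ι → E) :
    ‖∑ i ∈ s, x i‖ₑ ^ 2 ≤ s.card * ∑ i ∈ s, ‖x i‖ₑ ^ 2 := by
  have hcs := sq_sum_le_card_mul_sum_sq (s := s) (f := fun i => ‖x i‖₊)
  simp only [enorm_eq_nnnorm]
  exact_mod_cast (pow_le_pow_left₀ zero_le (nnnorm_sum_le s x) 2).trans hcs

lemma continuous_fourierIntegralAgainst {ν : Measure ℝ} {f : ℝ → ℂ} (hf : Integrable f ν) :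
    Continuous (fourierIntegralAgainst ν f) := by
  refine continuous_of_dominated (bound := fun η => ‖f η‖)
    (fun t => (Continuous.aestronglyMeasurable (by fun_prop)).mul hf.1)
    (fun t => ae_of_all _ fun η => ?_) hf.norm (ae_of_all _ fun η => by fun_prop)
  rw [norm_mul, norm_cexp_neg_I_mul_ofReal_mul_ofReal, one_mul]

lemma fourierIntegralAgainst_map_add_right (ν : Measure ℝ) (f : ℝ → ℂ) (c t : ℝ) :
    fourierIntegralAgainst (ν.map (· + c)) f t
      = cexp (-(I * c * t)) * fourierIntegralAgainst ν (fun η => f (η + c)) t := by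
  rw [fourierIntegralAgainst, fourierIntegralAgainst, ← integral_const_mul]
  refine (integral_map_equiv (MeasurableEquiv.addRight c) _).trans (integral_congr_ae
    (ae_of_all _ fun η => ?_))
  simp only [MeasurableEquiv.coe_addRight, ← mul_assoc, ← Complex.exp_add]
  push_cast
  ring_nf

lemma enorm_fourierIntegralAgainst_sum_map_add_right_sq_le {ι : Type*} (s : Finset ι)
    (c : ι → ℝ) (ν : Measure ℝ) {f : ℝ → ℂ} (hf : ∀ i ∈ s, Integrable f (ν.map (· + c i)))
    (t : ℝ) :
    ‖fourierIntegralAgainst (∑ i ∈ s, ν.map (· + c i)) f t‖ₑ ^ 2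
      ≤ s.card * ∑ i ∈ s, ‖fourierIntegralAgainst ν (fun η => f (η + c i)) t‖ₑ ^ 2 := by
  have hsplit : fourierIntegralAgainst (∑ i ∈ s, ν.map (· + c i)) f t
      = ∑ i ∈ s, fourierIntegralAgainst (ν.map (· + c i)) f t := by
    exact integral_finsetSum_measure fun i hi => (hf i hi).bdd_mul
      (Continuous.aestronglyMeasurable (by fun_prop))
      (ae_of_all _ fun η => (norm_cexp_neg_I_mul_ofReal_mul_ofReal η t).le)
  simp only [hsplit, fourierIntegralAgainst_map_add_right]
  refine (enorm_sum_sq_le_card_mul_sum_enorm_sq s _).trans_eq ?_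
  simp only [enorm_mul]
  simp only [← ofReal_norm, norm_cexp_neg_I_mul_ofReal_mul_ofReal, ENNReal.ofReal_one, one_mul]

theorem HasFourierBound.sum_map_add_right {μ ν : Measure ℝ} [IsFiniteMeasure ν] {C : ℝ≥0∞}
    (h : HasFourierBound μ ν C) {ι : Type*} (s : Finset ι) (c : ι → ℝ) :
    HasFourierBound μ (∑ i ∈ s, ν.map (· + c i)) (s.card * C) := by
  intro f hf
  have htranslate : ∀ i ∈ s, MemLp (fun η => f (η + c i)) 2 ν := by
    intro i hi
    classical
    have hle : ν.map (· + c i) ≤ ∑ j ∈ s, ν.map (· + c j) := by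
      rw [← Finset.add_sum_erase s _ hi]
      exact Measure.le_add_right le_rfl
    exact (measurableEmbedding_addRight (c i)).memLp_map_measure_iff.mp (hf.mono_measure hle)
  have hcont : ∀ i ∈ s, Continuous (fourierIntegralAgainst ν (fun η => f (η + c i))) :=
    fun i hi => continuous_fourierIntegralAgainst ((htranslate i hi).integrable one_le_two)
  have hfi : ∀ i ∈ s, Integrable f (ν.map (· + c i)) := fun i hi =>
    (measurableEmbedding_addRight (c i)).integrable_map_iff.mpr
      ((htranslate i hi).integrable one_le_two)
  calc ∫⁻ t, ‖fourierIntegralAgainst (∑ i ∈ s, ν.map (· + c i)) f t‖ₑ ^ 2 ∂μ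
      ≤ ∫⁻ t, s.card * ∑ i ∈ s, ‖fourierIntegralAgainst ν (fun η => f (η + c i)) t‖ₑ ^ 2 ∂μ :=
        lintegral_mono (enorm_fourierIntegralAgainst_sum_map_add_right_sq_le s c ν hfi)
    _ = s.card * ∑ i ∈ s, ∫⁻ t, ‖fourierIntegralAgainst ν (fun η => f (η + c i)) t‖ₑ ^ 2 ∂μ := by
        rw [lintegral_const_mul' _ _ (ENNReal.natCast_ne_top _), lintegral_finsetSum' _ fun i hi =>
          ((hcont i hi).measurable.enorm.pow_const 2).aemeasurable]
    _ ≤ s.card * ∑ i ∈ s, C * ∫⁻ η, ‖f (η + c i)‖ₑ ^ 2 ∂ν := by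
        gcongr with i hi
        exact h _ (htranslate i hi)
    _ = s.card * C * ∫⁻ η, ‖f η‖ₑ ^ 2 ∂(∑ i ∈ s, ν.map (· + c i)) := by
        simp only [lintegral_finsetSum_measure, Finset.mul_sum, mul_assoc]
        congr! 3 with i
        exact (lintegral_map_equiv (fun η => ‖f η‖ₑ ^ 2) (MeasurableEquiv.addRight (c i))).symm

lemma map_add_right_volume_restrict_Ioc (a b c : ℝ) :
    (volume.restrict (Ioc a b)).map (· + c) = volume.restrict (Ioc (a + c) (b + c)) := by
  have h := Measure.restrict_map (μ := volume) (measurable_add_const c)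
    (measurableSet_Ioc (a := a + c) (b := b + c))
  rwa [map_add_right_eq_self, preimage_add_const_Ioc, add_sub_cancel_right, add_sub_cancel_right,
    eq_comm] at h

lemma volume_restrict_Ioc_zero_mul_eq_sum_map_add_right {d : ℝ} (hd : 0 ≤ d) (k : ℕ) :
    volume.restrict (Ioc 0 (k * d))
      = ∑ j ∈ Finset.range k, (volume.restrict (Ioc 0 d)).map (· + j * d) := by
  induction k with
  | zero => simp
  | succ k ih =>
    rw [Finset.sum_range_succ, ← ih, map_add_right_volume_restrict_Ioc, zero_add,
      ← Measure.restrict_union (Ioc_disjoint_Ioc_of_le le_rfl) measurableSet_Ioc,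
      Ioc_union_Ioc_eq_Ioc (by positivity) (by linarith), Nat.cast_succ, add_one_mul, add_comm d]

theorem boundedness_on_longer_intervals_general
    (μ : Measure ℝ) (ℓ M : ℝ) (hℓ : 0 < ℓ)
    (h : ∀ f : ℝ → ℂ, MemLp f 2 (volume.restrict (Set.Ioc (0:ℝ) (2*ℓ))) →
      ∫⁻ t, (‖∫ η in Set.Ioc (0:ℝ) (2*ℓ), Complex.exp (-(Complex.I * η * t)) * f η‖₊ ^ 2
          : ENNReal) ∂μ
        ≤ ENNReal.ofReal M
          * ∫⁻ η in Set.Ioc (0:ℝ) (2*ℓ), (‖f η‖₊ ^ 2 : ENNReal)) :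
    ∀ k : ℕ, ∀ f : ℝ → ℂ,
      MemLp f 2 (volume.restrict (Set.Ioc (0:ℝ) (2*k*ℓ))) →
      ∫⁻ t, (‖∫ η in Set.Ioc (0:ℝ) (2*k*ℓ), Complex.exp (-(Complex.I * η * t)) * f η‖₊ ^ 2
          : ENNReal) ∂μ
        ≤ ENNReal.ofReal ((k:ℝ)^2 * M)
          * ∫⁻ η in Set.Ioc (0:ℝ) (2*k*ℓ), (‖f η‖₊ ^ 2 : ENNReal) := by
  intro k f hf
  have hsplit : volume.restrict (Ioc 0 (2 * k * ℓ))
      = ∑ j ∈ Finset.range k, (volume.restrict (Ioc 0 (2 * ℓ))).map (· + j * (2 * ℓ)) := by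
    rw [show 2 * (k : ℝ) * ℓ = k * (2 * ℓ) by ring]
    exact volume_restrict_Ioc_zero_mul_eq_sum_map_add_right (by positivity) k
  have hbound : HasFourierBound μ (volume.restrict (Ioc 0 (2 * ℓ))) (ENNReal.ofReal M) := h
  rw [hsplit] at hf ⊢
  refine (hbound.sum_map_add_right _ _ f hf).trans ?_
  gcongr ?_ * _
  rw [Finset.card_range, ENNReal.ofReal_mul (by positivity),
    ENNReal.ofReal_pow (Nat.cast_nonneg k), ENNReal.ofReal_natCast]
  gcongr
  exact_mod_cast Nat.le_self_pow two_ne_zero k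

/-- **Remark 5.9 of the paper.**  If the quadratic form
`∫_ℝ |∫₀^{2ℓ} e^{-iηt} f(η) dη|² dμ(t)` is bounded by `M‖f‖²` on `L²((0,2ℓ);ℂ)`,
then for every `k ∈ ℕ` the analogous form on `L²((0,2kℓ);ℂ)` is bounded by
`k²M‖f‖²`. -/
theorem boundedness_on_longer_intervals
    (μ : Measure ℝ) (ℓ M : ℝ) (hℓ : 0 < ℓ) (hM : 0 ≤ M)
    (h : ∀ f : ℝ → ℂ, MemLp f 2 (volume.restrict (Set.Ioc (0:ℝ) (2*ℓ))) →
      ∫⁻ t, (‖∫ η in Set.Ioc (0:ℝ) (2*ℓ), Complex.exp (-(Complex.I * η * t)) * f η‖₊ ^ 2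
          : ENNReal) ∂μ
        ≤ ENNReal.ofReal M
          * ∫⁻ η in Set.Ioc (0:ℝ) (2*ℓ), (‖f η‖₊ ^ 2 : ENNReal)) :
    ∀ k : ℕ, ∀ f : ℝ → ℂ,
      MemLp f 2 (volume.restrict (Set.Ioc (0:ℝ) (2*k*ℓ))) →
      ∫⁻ t, (‖∫ η in Set.Ioc (0:ℝ) (2*k*ℓ), Complex.exp (-(Complex.I * η * t)) * f η‖₊ ^ 2
          : ENNReal) ∂μ
        ≤ ENNReal.ofReal ((k:ℝ)^2 * M)
          * ∫⁻ η in Set.Ioc (0:ℝ) (2*k*ℓ), (‖f η‖₊ ^ 2 : ENNReal) :=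
  boundedness_on_longer_intervals_general μ ℓ M hℓ h
end

section
/- Let p ∈ ℕ, J = [[0, I_p],[I_p, 0]], and let γ = [γ₁ γ₂] ∈ ℂ^{p×2p} (γ₁, γ₂ the p×p blocks) satisfy γ J γ* = c I_p, i.e., γ₁γ₂* + γ₂γ₁* = c I_p, for some real c ≠ 0. Then both γ₁ and γ₂ are invertible. -/
open Matrix
open scoped ComplexOrder

/- A left null vector `w` of `A` kills both terms of `w (A Bᴴ + B Aᴴ) w*`, since `Aᴴ w* = (w A)*`,
whereas `w (c • 1) w* = c ∑ |wᵢ|² ≠ 0`. -/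
theorem Matrix.isUnit_of_mul_conjTranspose_add_eq_smul_one {n R : Type*} [Fintype n]
    [DecidableEq n] [Field R] [PartialOrder R] [StarRing R] [StarOrderedRing R]
    {c : R} (hc : c ≠ 0) {A B : Matrix n n R} (h : A * Bᴴ + B * Aᴴ = c • 1) : IsUnit A := by
  rw [isUnit_iff_isUnit_det, isUnit_iff_ne_zero]
  intro hdet
  obtain ⟨w, hw, hwA⟩ := exists_vecMul_eq_zero_iff.mpr hdet
  have hAw : Aᴴ *ᵥ star w = 0 := by rw [← star_vecMul, hwA, star_zero]
  have hform : w ᵥ* (A * Bᴴ + B * Aᴴ) ⬝ᵥ star w = 0 := by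
    rw [vecMul_add, add_dotProduct, ← vecMul_vecMul, hwA, zero_vecMul, zero_dotProduct, zero_add,
      ← vecMul_vecMul, ← dotProduct_mulVec, hAw, dotProduct_zero]
  rw [h, vecMul_smul, vecMul_one, smul_dotProduct, smul_eq_mul] at hform
  exact hw (dotProduct_self_star_eq_zero.mp ((mul_eq_zero.mp hform).resolve_left hc))

theorem blocks_invertible_of_gammaJgamma_general
    (p : ℕ) (c : ℝ) (hc : c ≠ 0)
    (γ₁ γ₂ : Matrix (Fin p) (Fin p) ℂ)
    (h' : γ₁ * γ₂ᴴ + γ₂ * γ₁ᴴ = (c : ℂ) • 1) :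
    IsUnit γ₁ ∧ IsUnit γ₂ := by
  have hc' : (c : ℂ) ≠ 0 := Complex.ofReal_ne_zero.mpr hc
  exact ⟨isUnit_of_mul_conjTranspose_add_eq_smul_one hc' h',
    isUnit_of_mul_conjTranspose_add_eq_smul_one hc' (add_comm (γ₂ * γ₁ᴴ) _ ▸ h')⟩

/-- **Nondegeneracy of the blocks** (used before (A2) and in the proof of
Proposition A.4 of the paper).  If `γ = [γ₁ γ₂]` satisfies
`γ J γ* = γ₁γ₂* + γ₂γ₁* = c I_p` for some real `c ≠ 0`, then `γ₁` and `γ₂` are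
invertible. -/
theorem blocks_invertible_of_gammaJgamma
    (p : ℕ) (c : ℝ) (hc : c ≠ 0)
    (J : Matrix (Fin p ⊕ Fin p) (Fin p ⊕ Fin p) ℂ)
    (hJ : J = Matrix.fromBlocks 0 1 1 0)
    (γ : Matrix (Fin p) (Fin p ⊕ Fin p) ℂ)
    (γ₁ γ₂ : Matrix (Fin p) (Fin p) ℂ)
    (hγ₁ : γ₁ = γ.submatrix id Sum.inl)
    (hγ₂ : γ₂ = γ.submatrix id Sum.inr)
    (h : γ * J * γᴴ = (c : ℂ) • 1)
    (h' : γ₁ * γ₂ᴴ + γ₂ * γ₁ᴴ = (c : ℂ) • 1) :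
    IsUnit γ₁ ∧ IsUnit γ₂ :=
  blocks_invertible_of_gammaJgamma_general p c hc γ₁ γ₂ h'
end

section
/- Let p ∈ ℕ, ℓ > 0, J = [[0, I_p],[I_p, 0]]. Let β = [β₁ β₂] : [0,2ℓ] → ℂ^{p×2p} be differentiable with β(0) = (1/√2)[I_p I_p] and β′(x) J β(x)* = 0 for all x (hence β(x)Jβ(x)* ≡ I_p and β₁(x), β₂(x) are invertible for all x). Set H(x) = β(x)*β(x), β̃(x) = [0 I_p] H(x) = β₂(x)*β(x), let β̃₂(x) = β₂(x)*β₂(x) be the second p×p block of β̃(x), and set θ(x) = (β₂(x)*)^{-1}. Then β(x) = θ(x) β̃(x) for all x, θ(0) = √2·I_p, and θ satisfies the differential equation θ′(x) + θ(x)·( β̃′(x) J β̃(x)* β̃₂(x)^{-1} ) = 0 on [0,2ℓ]. -/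
/-!
Differentiating `β J β*` gives `β′Jβ* + (β′Jβ*)* = 0` because `J* = J`, so `β J β*` keeps its
value `I_p` at `0`. In blocks this reads `β₁β₂* + β₂β₁* = I_p`, and a null vector `v` of `β₂*`
(or of `β₁*`) would give `v*v = 0`; hence both blocks are invertible. With `B = β₂*` one has
`β̃ = Bβ`, `β̃₂ = BB*` and `θ = B⁻¹`, so `β = θβ̃` and `θ′ = -θB′θ`. Finally
`β̃′Jβ̃* = (B′β + Bβ′)Jβ*B* = B′B*` by `βJβ* = I_p` and `β′Jβ* = 0`, whence
`β̃′Jβ̃*β̃₂⁻¹ = B′B⁻¹ = B′θ` and the differential equation holds.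
-/

open Matrix

variable {𝕜 : Type*} [RCLike 𝕜] {l m n o : Type*}

def HasEntrywiseDerivWithinAt (f : ℝ → Matrix m n 𝕜) (F : Matrix m n 𝕜) (s : Set ℝ) (x : ℝ) :
    Prop :=
  ∀ i j, HasDerivWithinAt (fun y => f y i j) (F i j) s x

section Entrywise

variable {f : ℝ → Matrix m n 𝕜} {F : Matrix m n 𝕜} {s : Set ℝ} {x : ℝ}

theorem hasEntrywiseDerivWithinAt_const (A : Matrix m n 𝕜) (s : Set ℝ) (x : ℝ) :
    HasEntrywiseDerivWithinAt (fun _ => A) 0 s x :=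
  fun _ _ => hasDerivWithinAt_const _ _ _

theorem HasEntrywiseDerivWithinAt.submatrix (hf : HasEntrywiseDerivWithinAt f F s x)
    (r : l → m) (c : o → n) :
    HasEntrywiseDerivWithinAt (fun y => (f y).submatrix r c) (F.submatrix r c) s x :=
  fun i j => hf (r i) (c j)

theorem HasEntrywiseDerivWithinAt.conjTranspose (hf : HasEntrywiseDerivWithinAt f F s x) :
    HasEntrywiseDerivWithinAt (fun y => (f y)ᴴ) Fᴴ s x :=
  fun i j => (hf j i).star

theorem HasEntrywiseDerivWithinAt.mul [Fintype n] {g : ℝ → Matrix n l 𝕜} {G : Matrix n l 𝕜}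
    (hf : HasEntrywiseDerivWithinAt f F s x) (hg : HasEntrywiseDerivWithinAt g G s x) :
    HasEntrywiseDerivWithinAt (fun y => f y * g y) (F * g x + f x * G) s x := by
  intro i j
  simp only [mul_apply, Matrix.add_apply, ← Finset.sum_add_distrib]
  exact HasDerivWithinAt.fun_sum fun k _ => (hf i k).mul (hg k j)

theorem constant_of_hasEntrywiseDerivWithinAt_zero {a b : ℝ}
    (hf : ∀ y ∈ Set.Icc a b, HasEntrywiseDerivWithinAt f 0 (Set.Icc a b) y) :
    ∀ x ∈ Set.Icc a b, f x = f a := by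
  intro x hx
  ext i j
  refine constant_of_has_deriv_right_zero (fun y hy => (hf y hy i j).continuousWithinAt)
    (fun y hy => ?_) x hx
  exact (hf y (Set.Ico_subset_Icc_self hy) i j).mono_of_mem_nhdsWithin
    (Icc_mem_nhdsGE_of_mem hy)

end Entrywise

section Inverse

/- Any norm would do: it only serves to reach the derivative of `Ring.inverse`, and all norms
on matrices induce the entrywise topology. -/
attribute [local instance] Matrix.linftyOpNormedAddCommGroup Matrix.linftyOpNormedRing
  Matrix.linftyOpNormedAlgebra

variable [Fintype n] [DecidableEq n] {f : ℝ → Matrix n n 𝕜} {F : Matrix n n 𝕜} {s : Set ℝ}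
  {x : ℝ}

theorem hasEntrywiseDerivWithinAt_iff_hasDerivWithinAt :
    HasEntrywiseDerivWithinAt f F s x ↔ HasDerivWithinAt f F s x := by
  let e : Matrix n n 𝕜 ≃L[ℝ] (n → n → 𝕜) :=
    (Matrix.ofLinearEquiv ℝ).symm.toContinuousLinearEquiv
  constructor
  · intro hf
    have he : HasDerivWithinAt (fun y => e (f y)) (e F) s x :=
      hasDerivWithinAt_pi.2 fun i => hasDerivWithinAt_pi.2 fun j => hf i j
    have h := e.symm.hasFDerivAt.comp_hasDerivWithinAt x he
    simp only [Function.comp_def] at h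
    exact h
  · intro hf i j
    exact hasDerivWithinAt_pi.1
      (hasDerivWithinAt_pi.1 (e.hasFDerivAt.comp_hasDerivWithinAt x hf) i) j

theorem HasEntrywiseDerivWithinAt.inv (hf : HasEntrywiseDerivWithinAt f F s x)
    (hfx : IsUnit (f x)) :
    HasEntrywiseDerivWithinAt (fun y => (f y)⁻¹) (-((f x)⁻¹ * F * (f x)⁻¹)) s x := by
  have : CompleteSpace (Matrix n n 𝕜) := FiniteDimensional.complete ℝ _
  have h := (hasFDerivAt_ringInverse (𝕜 := ℝ) hfx.unit).comp_hasDerivWithinAt x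
    (hasEntrywiseDerivWithinAt_iff_hasDerivWithinAt.1 hf)
  simp only [Matrix.coe_units_inv, IsUnit.unit_spec, Function.comp_def,
    ← Matrix.nonsing_inv_eq_ringInverse] at h
  exact hasEntrywiseDerivWithinAt_iff_hasDerivWithinAt.2 h

end Inverse

namespace Matrix

open scoped ComplexOrder in
theorem isUnit_of_mul_conjTranspose_add_mul_conjTranspose_eq_one [Fintype n] [DecidableEq n]
    {A C : Matrix n n 𝕜} (h : A * Cᴴ + C * Aᴴ = 1) : IsUnit C := by
  rw [← isUnit_conjTranspose, isUnit_iff_isUnit_det, isUnit_iff_ne_zero]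
  intro hdet
  obtain ⟨v, hv, hCv⟩ := exists_mulVec_eq_zero_iff.2 hdet
  have hvC : star v ᵥ* C = 0 := by
    simpa [hCv] using (star_mulVec Cᴴ v).symm
  have hquad := congrArg (fun M => star v ⬝ᵥ M *ᵥ v) h
  simp only [add_mulVec, ← mulVec_mulVec, hCv, mulVec_zero, dotProduct_mulVec, hvC, zero_vecMul,
    zero_dotProduct, one_mulVec, zero_add] at hquad
  exact hv (dotProduct_star_self_eq_zero.1 hquad.symm)

theorem fromCols_mul_fromBlocks_mul_conjTranspose [Fintype n] [DecidableEq n]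
    (A C : Matrix m n 𝕜) :
    fromCols A C * (fromBlocks 0 1 1 0 : Matrix (n ⊕ n) (n ⊕ n) 𝕜) * (fromCols A C)ᴴ =
      A * Cᴴ + C * Aᴴ := by
  rw [conjTranspose_fromCols_eq_fromRows_conjTranspose, fromCols_mul_fromBlocks,
    fromCols_mul_fromRows]
  simp [add_comm]

theorem isUnit_toCols_of_mul_fromBlocks_mul_conjTranspose_eq_one [Fintype n] [DecidableEq n]
    {A : Matrix n (n ⊕ n) 𝕜} (h : A * (fromBlocks 0 1 1 0 : Matrix (n ⊕ n) (n ⊕ n) 𝕜) * Aᴴ = 1) :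
    IsUnit A.toCols₁ ∧ IsUnit A.toCols₂ := by
  rw [← fromCols_toCols A, fromCols_mul_fromBlocks_mul_conjTranspose] at h
  exact ⟨isUnit_of_mul_conjTranspose_add_mul_conjTranspose_eq_one (by rwa [add_comm]),
    isUnit_of_mul_conjTranspose_add_mul_conjTranspose_eq_one h⟩

theorem inv_sqrt_two_smul_fromCols_one_one_mul_fromBlocks_mul_conjTranspose
    [Fintype n] [DecidableEq n] :
    (((√2 : ℝ) : 𝕜)⁻¹ • fromCols (1 : Matrix n n 𝕜) (1 : Matrix n n 𝕜)) *
      (fromBlocks 0 1 1 0 : Matrix (n ⊕ n) (n ⊕ n) 𝕜) *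
      (((√2 : ℝ) : 𝕜)⁻¹ • fromCols (1 : Matrix n n 𝕜) (1 : Matrix n n 𝕜))ᴴ = 1 := by
  rw [conjTranspose_smul, Matrix.smul_mul, Matrix.mul_smul, Matrix.smul_mul,
    fromCols_mul_fromBlocks_mul_conjTranspose, smul_smul]
  have hc : star ((√2 : ℝ) : 𝕜)⁻¹ * ((√2 : ℝ) : 𝕜)⁻¹ = 2⁻¹ := by
    rw [star_inv₀, RCLike.star_def, RCLike.conj_ofReal, ← mul_inv, ← RCLike.ofReal_mul,
      Real.mul_self_sqrt zero_le_two, RCLike.ofReal_ofNat]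
  rw [hc, conjTranspose_one, Matrix.mul_one, ← two_smul 𝕜, smul_smul,
    inv_mul_cancel₀ two_ne_zero, one_smul]

theorem inv_conjTranspose_ofReal_inv_smul_one [Fintype n] [DecidableEq n] {r : ℝ} (hr : r ≠ 0) :
    (((r : 𝕜)⁻¹ • (1 : Matrix n n 𝕜))ᴴ)⁻¹ = (r : 𝕜) • 1 := by
  refine inv_eq_left_inv ?_
  rw [conjTranspose_smul, conjTranspose_one, Matrix.smul_mul, Matrix.one_mul, smul_smul,
    star_inv₀, RCLike.star_def, RCLike.conj_ofReal, mul_inv_cancel₀ (RCLike.ofReal_ne_zero.2 hr),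
    one_smul]

theorem submatrix_conjTranspose_mul [Fintype m] (A : Matrix m n 𝕜) (C : Matrix m l 𝕜)
    (r : o → n) : (Aᴴ * C).submatrix r id = (A.submatrix id r)ᴴ * C := by
  ext i j
  simp [mul_apply]

theorem add_mul_mul_conjTranspose_mul_inv_eq_mul_inv [Fintype m] [Fintype n] [DecidableEq n]
    {B B' : Matrix n n 𝕜} {β β' : Matrix n m 𝕜} {J : Matrix m m 𝕜} (hB : IsUnit B)
    (hβ : β * J * βᴴ = 1) (hβ' : β' * J * βᴴ = 0) :
    (B' * β + B * β') * J * (B * β)ᴴ * (B * Bᴴ)⁻¹ = B' * B⁻¹ := by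
  have hBH : IsUnit Bᴴ.det := (isUnit_iff_isUnit_det _).1 ((isUnit_conjTranspose B).2 hB)
  calc (B' * β + B * β') * J * (B * β)ᴴ * (B * Bᴴ)⁻¹
      = (B' * (β * J * βᴴ) + B * (β' * J * βᴴ)) * (Bᴴ * Bᴴ⁻¹) * B⁻¹ := by
        simp only [conjTranspose_mul, mul_inv_rev, Matrix.add_mul, Matrix.mul_assoc]
    _ = B' * B⁻¹ := by
        rw [hβ, hβ', mul_nonsing_inv _ hBH, Matrix.mul_zero, add_zero, Matrix.mul_one,
          Matrix.mul_one]

end Matrix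

theorem constant_mul_mul_conjTranspose_of_hasEntrywiseDerivWithinAt [Fintype n]
    {β β' : ℝ → Matrix m n 𝕜} {J : Matrix n n 𝕜} {a b : ℝ} (hJ : J.IsHermitian)
    (hβ : ∀ x ∈ Set.Icc a b, HasEntrywiseDerivWithinAt β (β' x) (Set.Icc a b) x)
    (hβJ : ∀ x ∈ Set.Icc a b, β' x * J * (β x)ᴴ = 0) :
    ∀ x ∈ Set.Icc a b, β x * J * (β x)ᴴ = β a * J * (β a)ᴴ := by
  refine constant_of_hasEntrywiseDerivWithinAt_zero fun x hx => ?_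
  have h := ((hβ x hx).mul (hasEntrywiseDerivWithinAt_const J _ x)).mul (hβ x hx).conjTranspose
  have hsymm : β x * J * (β' x)ᴴ = (β' x * J * (β x)ᴴ)ᴴ := by
    rw [conjTranspose_mul, conjTranspose_mul, conjTranspose_conjTranspose, hJ.eq,
      Matrix.mul_assoc]
  simpa [hsymm, hβJ x hx] using h

theorem recover_beta_from_Hamiltonian_general
    (p : ℕ) (ℓ : ℝ)
    (J : Matrix (Fin p ⊕ Fin p) (Fin p ⊕ Fin p) ℂ)
    (hJ : J = Matrix.fromBlocks 0 1 1 0)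
    (β β' : ℝ → Matrix (Fin p) (Fin p ⊕ Fin p) ℂ)
    (hβdiff : ∀ x ∈ Set.Icc (0:ℝ) (2*ℓ), ∀ i k,
      HasDerivWithinAt (fun y => β y i k) (β' x i k) (Set.Icc (0:ℝ) (2*ℓ)) x)
    (hβ0 : β 0 = (((Real.sqrt 2 : ℝ) : ℂ))⁻¹ • Matrix.fromCols 1 1)
    (hβJ : ∀ x ∈ Set.Icc (0:ℝ) (2*ℓ), β' x * J * (β x)ᴴ = 0)
    (H : ℝ → Matrix (Fin p ⊕ Fin p) (Fin p ⊕ Fin p) ℂ)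
    (hH : ∀ x, H x = (β x)ᴴ * β x)
    (βt : ℝ → Matrix (Fin p) (Fin p ⊕ Fin p) ℂ)
    (hβt : ∀ x, βt x = (H x).submatrix Sum.inr id)
    (βt₂ : ℝ → Matrix (Fin p) (Fin p) ℂ)
    (hβt₂ : ∀ x, βt₂ x = (βt x).submatrix id Sum.inr)
    (θ : ℝ → Matrix (Fin p) (Fin p) ℂ)
    (hθ : ∀ x, θ x = (((β x).submatrix id Sum.inr)ᴴ)⁻¹) :
    (∀ x ∈ Set.Icc (0:ℝ) (2*ℓ),
      β x * J * (β x)ᴴ = 1 ∧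
      IsUnit ((β x).submatrix id Sum.inl) ∧ IsUnit ((β x).submatrix id Sum.inr) ∧
      β x = θ x * βt x) ∧
    θ 0 = ((Real.sqrt 2 : ℝ) : ℂ) • 1 ∧
    -- θ satisfies θ′ + θ(β̃′Jβ̃*β̃₂⁻¹) = 0 on [0,2ℓ]
    (∃ (βt' : ℝ → Matrix (Fin p) (Fin p ⊕ Fin p) ℂ) (θ' : ℝ → Matrix (Fin p) (Fin p) ℂ),
      (∀ x ∈ Set.Icc (0:ℝ) (2*ℓ), ∀ i k,
        HasDerivWithinAt (fun y => βt y i k) (βt' x i k) (Set.Icc (0:ℝ) (2*ℓ)) x) ∧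
      (∀ x ∈ Set.Icc (0:ℝ) (2*ℓ), ∀ i k,
        HasDerivWithinAt (fun y => θ y i k) (θ' x i k) (Set.Icc (0:ℝ) (2*ℓ)) x) ∧
      (∀ x ∈ Set.Icc (0:ℝ) (2*ℓ),
        θ' x + θ x * (βt' x * J * (βt x)ᴴ * (βt₂ x)⁻¹) = 0)) := by
  set s := Set.Icc (0:ℝ) (2*ℓ)
  set B : ℝ → Matrix (Fin p) (Fin p) ℂ := fun x => ((β x).submatrix id Sum.inr)ᴴ
  set B' : ℝ → Matrix (Fin p) (Fin p) ℂ := fun x => ((β' x).submatrix id Sum.inr)ᴴ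
  have hβ : ∀ x ∈ s, HasEntrywiseDerivWithinAt β (β' x) s x := hβdiff
  have hJH : J.IsHermitian := hJ ▸ isHermitian_zero.fromBlocks conjTranspose_one isHermitian_zero
  have hform : ∀ x ∈ s, β x * J * (β x)ᴴ = 1 := fun x hx => by
    rw [constant_mul_mul_conjTranspose_of_hasEntrywiseDerivWithinAt hJH hβ hβJ x hx, hβ0, hJ]
    exact inv_sqrt_two_smul_fromCols_one_one_mul_fromBlocks_mul_conjTranspose
  have hblocks x (hx : x ∈ s) : IsUnit (β x).toCols₁ ∧ IsUnit (β x).toCols₂ :=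
    isUnit_toCols_of_mul_fromBlocks_mul_conjTranspose_eq_one (hJ ▸ hform x hx)
  have hB x (hx : x ∈ s) : IsUnit (B x) := (isUnit_conjTranspose _).2 (hblocks x hx).2
  have hβtB : βt = fun x => B x * β x :=
    funext fun x => by rw [hβt, hH, submatrix_conjTranspose_mul]
  have hθB : θ = fun x => (B x)⁻¹ := funext hθ
  refine ⟨fun x hx => ⟨hform x hx, (hblocks x hx).1, (hblocks x hx).2, ?_⟩, ?_,
    fun x => B' x * β x + B x * β' x, fun x => -(θ x * B' x * θ x), fun x hx => ?_,
    fun x hx => ?_, fun x hx => ?_⟩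
  · rw [hθB, hβtB]
    exact (nonsing_inv_mul_cancel_left _ _ ((isUnit_iff_isUnit_det _).1 (hB x hx))).symm
  · rw [hθ, hβ0, submatrix_smul]
    exact inv_conjTranspose_ofReal_inv_smul_one (Real.sqrt_ne_zero'.2 two_pos)
  · rw [hβtB]
    exact ((hβ x hx).submatrix id Sum.inr).conjTranspose.mul (hβ x hx)
  · rw [hθB]
    exact ((hβ x hx).submatrix id Sum.inr).conjTranspose.inv (hB x hx)
  · have hβt₂B : βt₂ x = B x * (B x)ᴴ := by
      rw [hβt₂, hβtB, conjTranspose_conjTranspose]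
      rfl
    rw [hβt₂B, hβtB, hθB]
    beta_reduce
    rw [add_mul_mul_conjTranspose_mul_inv_eq_mul_inv (hB x hx) (hform x hx) (hβJ x hx),
      ← Matrix.mul_assoc, neg_add_cancel]

/-- **Proposition A.1 of the paper.**  Let `β = [β₁ β₂]` be differentiable on `[0,2ℓ]`
with `β(0) = (1/√2)[I_p I_p]` and `β′Jβ* ≡ 0` (hence `βJβ* ≡ I_p` and `β₁, β₂`
invertible).  With `H = β*β`, `β̃ = [0 I_p]H`, `β̃₂` the second block of `β̃` and
`θ = (β₂*)⁻¹`, one has `β = θβ̃`, `θ(0) = √2·I_p`, and `θ` solves the differential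
equation `θ′ + θ(β̃′Jβ̃*β̃₂⁻¹) = 0` on `[0,2ℓ]`. -/
theorem recover_beta_from_Hamiltonian
    (p : ℕ) (ℓ : ℝ) (hℓ : 0 < ℓ)
    (J : Matrix (Fin p ⊕ Fin p) (Fin p ⊕ Fin p) ℂ)
    (hJ : J = Matrix.fromBlocks 0 1 1 0)
    (β β' : ℝ → Matrix (Fin p) (Fin p ⊕ Fin p) ℂ)
    (hβdiff : ∀ x ∈ Set.Icc (0:ℝ) (2*ℓ), ∀ i k,
      HasDerivWithinAt (fun y => β y i k) (β' x i k) (Set.Icc (0:ℝ) (2*ℓ)) x)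
    (hβ0 : β 0 = (((Real.sqrt 2 : ℝ) : ℂ))⁻¹ • Matrix.fromCols 1 1)
    (hβJ : ∀ x ∈ Set.Icc (0:ℝ) (2*ℓ), β' x * J * (β x)ᴴ = 0)
    (H : ℝ → Matrix (Fin p ⊕ Fin p) (Fin p ⊕ Fin p) ℂ)
    (hH : ∀ x, H x = (β x)ᴴ * β x)
    (βt : ℝ → Matrix (Fin p) (Fin p ⊕ Fin p) ℂ)
    (hβt : ∀ x, βt x = (H x).submatrix Sum.inr id)
    (βt₂ : ℝ → Matrix (Fin p) (Fin p) ℂ)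
    (hβt₂ : ∀ x, βt₂ x = (βt x).submatrix id Sum.inr)
    (θ : ℝ → Matrix (Fin p) (Fin p) ℂ)
    (hθ : ∀ x, θ x = (((β x).submatrix id Sum.inr)ᴴ)⁻¹) :
    (∀ x ∈ Set.Icc (0:ℝ) (2*ℓ),
      β x * J * (β x)ᴴ = 1 ∧
      IsUnit ((β x).submatrix id Sum.inl) ∧ IsUnit ((β x).submatrix id Sum.inr) ∧
      β x = θ x * βt x) ∧
    θ 0 = ((Real.sqrt 2 : ℝ) : ℂ) • 1 ∧
    -- θ satisfies θ′ + θ(β̃′Jβ̃*β̃₂⁻¹) = 0 on [0,2ℓ]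
    (∃ (βt' : ℝ → Matrix (Fin p) (Fin p ⊕ Fin p) ℂ) (θ' : ℝ → Matrix (Fin p) (Fin p) ℂ),
      (∀ x ∈ Set.Icc (0:ℝ) (2*ℓ), ∀ i k,
        HasDerivWithinAt (fun y => βt y i k) (βt' x i k) (Set.Icc (0:ℝ) (2*ℓ)) x) ∧
      (∀ x ∈ Set.Icc (0:ℝ) (2*ℓ), ∀ i k,
        HasDerivWithinAt (fun y => θ y i k) (θ' x i k) (Set.Icc (0:ℝ) (2*ℓ)) x) ∧
      (∀ x ∈ Set.Icc (0:ℝ) (2*ℓ),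
        θ' x + θ x * (βt' x * J * (βt x)ᴴ * (βt₂ x)⁻¹) = 0)) :=
  recover_beta_from_Hamiltonian_general p ℓ J hJ β β' hβdiff hβ0 hβJ H hH βt hβt βt₂ hβt₂ θ hθ
end

section
/- Let p ∈ ℕ, ℓ > 0, j = diag(I_p, −I_p), J = [[0, I_p],[I_p, 0]], Θ = (1/√2)·[[I_p, −I_p],[I_p, I_p]] (so Θ j Θ* = J). Let β, γ : [0,2ℓ] → ℂ^{p×2p} be differentiable with derivatives having entries in L²(0,2ℓ), and assume: β(0) = (1/√2)[I_p I_p], γ(0) = (1/√2)[−I_p I_p], and for all x ∈ [0,2ℓ]: β(x) J γ(x)* = 0, β(x) J β(x)* = I_p, γ(x) J γ(x)* = −I_p, β′(x) J β(x)* = 0, γ′(x) J γ(x)* = 0. Define v(x) := 2i β′(2x) J γ(2x)* for x ∈ [0,ℓ], V(x) = [[0, v(x)],[v(x)*, 0]], and y(x) := [β(2x); γ(2x)]·J Θ j (the 2p×2p matrix whose top block row is β(2x) and bottom block row is γ(2x), multiplied on the right by JΘj). Then y(0) = I_{2p}, y(x) j y(x)* = j for all x, and y′(x) = i j V(x) y(x)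 for a.e. x ∈ [0,ℓ]. In other words, y is the fundamental solution u(·,0) of the Dirac system with potential v, and β(x) = [I_p 0]y(x/2)Θ*, γ(x) = [0 I_p]y(x/2)Θ*. -/
/-! The rows of `[β; γ]` form a `J`-orthonormal frame, i.e. `[β; γ] J [β; γ]* = j`; since a
one-sided inverse of a square matrix is two-sided, also `β*β - γ*γ = J`.  Differentiating
`βJγ* = 0` and feeding in `β′Jβ* = γ′Jγ* = 0` and this completeness relation gives
`β′ = (i/2) v γ` and `γ′ = -(i/2) v* β`: the Dirac system for `[β; γ]`, at double speed.
The constant factor `JΘj` is just `Θ`, a unitary matrix with `ΘjΘ* = J`. -/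

open MeasureTheory Matrix Set

-- Entrywise, as rectangular matrices carry no preferred norm.
def HasMatrixDerivWithinAt {m n : Type*} (A : ℝ → Matrix m n ℂ) (A' : Matrix m n ℂ)
    (s : Set ℝ) (x : ℝ) : Prop :=
  ∀ i k, HasDerivWithinAt (fun t => A t i k) (A' i k) s x

theorem hasMatrixDerivWithinAt_const {m n : Type*} (C : Matrix m n ℂ) (s : Set ℝ) (x : ℝ) :
    HasMatrixDerivWithinAt (fun _ => C) 0 s x :=
  fun _ _ => hasDerivWithinAt_const _ _ _

namespace HasMatrixDerivWithinAt

variable {l m n q : Type*} {A : ℝ → Matrix m n ℂ} {A' : Matrix m n ℂ} {s : Set ℝ}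
  {x : ℝ}

theorem mul [Fintype n] {B : ℝ → Matrix n q ℂ} {B' : Matrix n q ℂ}
    (hA : HasMatrixDerivWithinAt A A' s x) (hB : HasMatrixDerivWithinAt B B' s x) :
    HasMatrixDerivWithinAt (fun t => A t * B t) (A' * B x + A x * B') s x := by
  intro i k
  simpa only [mul_apply, Matrix.add_apply, Finset.sum_add_distrib] using
    HasDerivWithinAt.fun_sum fun r _ => (hA i r).fun_mul (hB r k)

theorem const_mul [Fintype m] (C : Matrix l m ℂ) (hA : HasMatrixDerivWithinAt A A' s x) :
    HasMatrixDerivWithinAt (fun t => C * A t) (C * A') s x := by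
  simpa using (hasMatrixDerivWithinAt_const C s x).mul hA

theorem mul_const [Fintype n] (hA : HasMatrixDerivWithinAt A A' s x) (C : Matrix n q ℂ) :
    HasMatrixDerivWithinAt (fun t => A t * C) (A' * C) s x := by
  simpa using hA.mul (hasMatrixDerivWithinAt_const C s x)

theorem conjTranspose (hA : HasMatrixDerivWithinAt A A' s x) :
    HasMatrixDerivWithinAt (fun t => (A t)ᴴ) A'ᴴ s x :=
  fun i k => (hA k i).star

theorem fromRows {B : ℝ → Matrix l n ℂ} {B' : Matrix l n ℂ}
    (hA : HasMatrixDerivWithinAt A A' s x) (hB : HasMatrixDerivWithinAt B B' s x) :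
    HasMatrixDerivWithinAt (fun t => Matrix.fromRows (A t) (B t)) (Matrix.fromRows A' B') s x
  | .inl i, k => hA i k
  | .inr i, k => hB i k

theorem comp_const_mul {s' : Set ℝ} (c : ℝ) (hA : HasMatrixDerivWithinAt A A' s' (c * x))
    (hs : MapsTo (c * ·) s s') :
    HasMatrixDerivWithinAt (fun t => A (c * t)) ((c : ℂ) • A') s x := by
  intro i k
  simpa [Function.comp_def, Complex.real_smul, mul_comm] using
    (hA i k).scomp x ((hasDerivWithinAt_id x s).const_mul c) hs

theorem eq_zero_of_eqOn_zero (hA : HasMatrixDerivWithinAt A A' s x) (h0 : EqOn A 0 s)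
    (hx : x ∈ s) (hs : UniqueDiffWithinAt ℝ s x) : A' = 0 := by
  ext i k
  exact hs.eq_deriv _ (hA i k) <|
    (hasDerivWithinAt_const x s 0).congr_of_mem (fun t ht => by simp [h0 ht]) hx

theorem mul_mul_conjTranspose_eq_zero_of_eqOn [Fintype n] {B : ℝ → Matrix m n ℂ}
    {B' : Matrix m n ℂ} (C : Matrix n n ℂ) (hA : HasMatrixDerivWithinAt A A' s x)
    (hB : HasMatrixDerivWithinAt B B' s x) (h0 : EqOn (fun t => A t * C * (B t)ᴴ) 0 s)
    (hx : x ∈ s) (hs : UniqueDiffWithinAt ℝ s x) :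
    A' * C * (B x)ᴴ + A x * C * B'ᴴ = 0 := by
  simpa only [Matrix.mul_assoc] using
    (hA.mul (hB.conjTranspose.const_mul C)).eq_zero_of_eqOn_zero
      (fun t ht => by simpa only [Matrix.mul_assoc] using h0 ht) hx hs

end HasMatrixDerivWithinAt

theorem Complex.ofReal_sqrt_two_inv_mul_self :
    ((Real.sqrt 2 : ℝ) : ℂ)⁻¹ * ((Real.sqrt 2 : ℝ) : ℂ)⁻¹ = 2⁻¹ := by
  rw [← mul_inv, ← Complex.ofReal_mul, Real.mul_self_sqrt zero_le_two]
  norm_num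

namespace Matrix

theorem conjTranspose_mul_mul_eq_of_mul_mul_conjTranspose_eq {n R : Type*} [Fintype n]
    [DecidableEq n] [CommRing R] [StarRing R] {A J j : Matrix n n R} (hJ : J * J = 1)
    (hj : j * j = 1) (h : A * J * Aᴴ = j) : Aᴴ * j * A = J := by
  have hright : A * (J * Aᴴ * j) = 1 := by simp only [← Matrix.mul_assoc, h, hj]
  have hleft : J * Aᴴ * j * A = 1 := mul_eq_one_comm.mp hright
  calc Aᴴ * j * A = J * (J * Aᴴ * j * A) := by
        simp only [← Matrix.mul_assoc, hJ, Matrix.one_mul]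
    _ = J := by rw [hleft, Matrix.mul_one]

section Frame

variable {m n : Type*} [DecidableEq m] {J : Matrix n n ℂ} {b b' g g' : Matrix m n ℂ}

theorem fromRows_mul_mul_conjTranspose_fromRows [Fintype n] (hJ : Jᴴ = J)
    (hbb : b * J * bᴴ = 1) (hbg : b * J * gᴴ = 0) (hgg : g * J * gᴴ = -1) :
    fromRows b g * J * (fromRows b g)ᴴ = fromBlocks 1 0 0 (-1) := by
  have hgb : g * J * bᴴ = 0 := by
    simpa only [conjTranspose_mul, conjTranspose_conjTranspose, hJ, conjTranspose_zero,
      Matrix.mul_assoc] using congrArg conjTranspose hbg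
  rw [fromRows_mul, conjTranspose_fromRows_eq_fromCols_conjTranspose, fromRows_mul_fromCols,
    hbb, hbg, hgb, hgg]

theorem conjTranspose_fromRows_mul_signature_mul_fromRows [Fintype m] :
    (fromRows b g)ᴴ * (fromBlocks 1 0 0 (-1) : Matrix (m ⊕ m) (m ⊕ m) ℂ) * fromRows b g
      = bᴴ * b - gᴴ * g := by
  rw [conjTranspose_fromRows_eq_fromCols_conjTranspose, fromCols_mul_fromBlocks,
    fromCols_mul_fromRows]
  simp [sub_eq_add_neg]

theorem conjTranspose_mul_sub_conjTranspose_mul_eq [Fintype m]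
    {J : Matrix (m ⊕ m) (m ⊕ m) ℂ} {b g : Matrix m (m ⊕ m) ℂ}
    (hJJ : J * J = 1) (hJ : Jᴴ = J)
    (hbb : b * J * bᴴ = 1) (hbg : b * J * gᴴ = 0) (hgg : g * J * gᴴ = -1) :
    bᴴ * b - gᴴ * g = J := by
  rw [← conjTranspose_fromRows_mul_signature_mul_fromRows]
  exact conjTranspose_mul_mul_eq_of_mul_mul_conjTranspose_eq hJJ
    (by simp [fromBlocks_multiply]) (fromRows_mul_mul_conjTranspose_fromRows hJ hbb hbg hgg)

theorem dirac_fromRows [Fintype m] [Fintype n] [DecidableEq n] (hJJ : J * J = 1) (hJ : Jᴴ = J)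
    (hcomp : bᴴ * b - gᴴ * g = J) (hb'b : b' * J * bᴴ = 0) (hg'g : g' * J * gᴴ = 0)
    (hder : b' * J * gᴴ + b * J * g'ᴴ = 0) {v : Matrix m m ℂ}
    (hv : v = (2 * Complex.I) • (b' * J * gᴴ)) :
    Complex.I • (fromBlocks 1 0 0 (-1) * fromBlocks 0 v vᴴ 0 * fromRows b g)
      = (2 : ℂ) • fromRows b' g' := by
  have hgg : gᴴ * g = bᴴ * b - J := by rw [← hcomp]; abel
  have hbb : bᴴ * b = J + gᴴ * g := by rw [← hcomp]; abel
  have htop : b' * J * gᴴ * g = -b' :=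
    calc b' * J * gᴴ * g = b' * J * bᴴ * b - b' * (J * J) := by
          rw [Matrix.mul_assoc _ gᴴ, hgg, Matrix.mul_sub, Matrix.mul_assoc b' J J,
            Matrix.mul_assoc (b' * J)]
      _ = -b' := by rw [hb'b, hJJ]; simp
  have hbot : g * J * b'ᴴ * b = -g' := by
    have hgb' : g * J * b'ᴴ = -(g' * J * bᴴ) := by
      simpa only [conjTranspose_add, conjTranspose_mul, conjTranspose_conjTranspose, hJ,
        conjTranspose_zero, ← Matrix.mul_assoc, ← eq_neg_iff_add_eq_zero] using
        congrArg conjTranspose hder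
    calc g * J * b'ᴴ * b = -(g' * J * (J + gᴴ * g)) := by
          rw [hgb', ← hbb, Matrix.neg_mul, Matrix.mul_assoc]
      _ = -g' := by
          rw [Matrix.mul_add, Matrix.mul_assoc g', hJJ, ← Matrix.mul_assoc, hg'g]; simp
  have hvH : vᴴ = (-(2 * Complex.I)) • (g * J * b'ᴴ) := by
    rw [hv, conjTranspose_smul, conjTranspose_mul, conjTranspose_mul, hJ, ← Matrix.mul_assoc]
    simp
  rw [fromBlocks_multiply, fromBlocks_mul_fromRows, hvH, hv]
  simp only [Matrix.smul_mul, htop, hbot, Matrix.one_mul, Matrix.zero_mul, Matrix.mul_zero,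
    Matrix.neg_mul, add_zero, zero_add]
  ext (i | i) k <;> simp [fromRows_apply_inl, fromRows_apply_inr] <;> ring_nf <;>
    simp [Complex.I_sq]

end Frame

section BlockRotation

variable (m : Type*) [DecidableEq m]

noncomputable def blockRotation : Matrix (m ⊕ m) (m ⊕ m) ℂ :=
  ((Real.sqrt 2 : ℝ) : ℂ)⁻¹ • fromBlocks 1 (-1) 1 1

theorem conjTranspose_blockRotation :
    (blockRotation m)ᴴ = ((Real.sqrt 2 : ℝ) : ℂ)⁻¹ • fromBlocks 1 1 (-1) 1 := by
  rw [blockRotation, conjTranspose_smul, fromBlocks_conjTranspose]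
  simp [Complex.conj_ofReal]

theorem blockRotation_mul_conjTranspose [Fintype m] :
    blockRotation m * (blockRotation m)ᴴ = 1 := by
  rw [conjTranspose_blockRotation, blockRotation, smul_mul_smul_comm,
    Complex.ofReal_sqrt_two_inv_mul_self, fromBlocks_multiply]
  ext (i | i) (k | k) <;> simp [one_apply] <;> split_ifs <;> norm_num

theorem blockRotation_mul_signature_mul_conjTranspose [Fintype m] :
    blockRotation m * fromBlocks 1 0 0 (-1) * (blockRotation m)ᴴ = fromBlocks 0 1 1 0 := by
  rw [conjTranspose_blockRotation, blockRotation, Matrix.smul_mul, smul_mul_smul_comm,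
    Complex.ofReal_sqrt_two_inv_mul_self, fromBlocks_multiply, fromBlocks_multiply]
  ext (i | i) (k | k) <;> simp [one_apply] <;> split_ifs <;> norm_num

theorem swap_mul_blockRotation_mul_signature [Fintype m] :
    fromBlocks 0 1 1 0 * blockRotation m * fromBlocks 1 0 0 (-1) = blockRotation m := by
  rw [blockRotation, Matrix.mul_smul, Matrix.smul_mul, fromBlocks_multiply, fromBlocks_multiply]
  simp

theorem fromRows_smul_fromCols_eq_conjTranspose_blockRotation :
    fromRows (((Real.sqrt 2 : ℝ) : ℂ)⁻¹ • fromCols 1 1)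
        (((Real.sqrt 2 : ℝ) : ℂ)⁻¹ • fromCols (-1) 1) = (blockRotation m)ᴴ := by
  rw [conjTranspose_blockRotation, ← fromRows_fromCols_eq_fromBlocks]
  ext (i | i) (k | k) <;> simp

end BlockRotation

end Matrix

theorem beta_gamma_generate_dirac_system_general
    (p : ℕ) (ℓ : ℝ) (hℓ : 0 < ℓ)
    (j J Θ : Matrix (Fin p ⊕ Fin p) (Fin p ⊕ Fin p) ℂ)
    (hj : j = Matrix.fromBlocks 1 0 0 (-1))
    (hJ : J = Matrix.fromBlocks 0 1 1 0)
    (hΘ : Θ = (((Real.sqrt 2 : ℝ) : ℂ))⁻¹ • Matrix.fromBlocks 1 (-1) 1 1)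
    (β β' γ γ' : ℝ → Matrix (Fin p) (Fin p ⊕ Fin p) ℂ)
    (hβdiff : ∀ x ∈ Set.Icc (0:ℝ) (2*ℓ), ∀ i k,
      HasDerivWithinAt (fun y => β y i k) (β' x i k) (Set.Icc (0:ℝ) (2*ℓ)) x)
    (hγdiff : ∀ x ∈ Set.Icc (0:ℝ) (2*ℓ), ∀ i k,
      HasDerivWithinAt (fun y => γ y i k) (γ' x i k) (Set.Icc (0:ℝ) (2*ℓ)) x)
    (hβ0 : β 0 = (((Real.sqrt 2 : ℝ) : ℂ))⁻¹ • Matrix.fromCols 1 1)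
    (hγ0 : γ 0 = (((Real.sqrt 2 : ℝ) : ℂ))⁻¹ • Matrix.fromCols (-1) 1)
    (hβγ : ∀ x ∈ Set.Icc (0:ℝ) (2*ℓ), β x * J * (γ x)ᴴ = 0)
    (hββ : ∀ x ∈ Set.Icc (0:ℝ) (2*ℓ), β x * J * (β x)ᴴ = 1)
    (hγγ : ∀ x ∈ Set.Icc (0:ℝ) (2*ℓ), γ x * J * (γ x)ᴴ = -1)
    (hβ'β : ∀ x ∈ Set.Icc (0:ℝ) (2*ℓ), β' x * J * (β x)ᴴ = 0)
    (hγ'γ : ∀ x ∈ Set.Icc (0:ℝ) (2*ℓ), γ' x * J * (γ x)ᴴ = 0)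
    (v : ℝ → Matrix (Fin p) (Fin p) ℂ)
    (hv : ∀ x, v x = ((2 : ℂ) * Complex.I) • (β' (2*x) * J * (γ (2*x))ᴴ))
    (V : ℝ → Matrix (Fin p ⊕ Fin p) (Fin p ⊕ Fin p) ℂ)
    (hV : ∀ x, V x = Matrix.fromBlocks 0 (v x) ((v x)ᴴ) 0)
    (y : ℝ → Matrix (Fin p ⊕ Fin p) (Fin p ⊕ Fin p) ℂ)
    (hy : ∀ x, y x = Matrix.fromRows (β (2*x)) (γ (2*x)) * (J * Θ * j)) :
    y 0 = 1 ∧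
    (∀ x ∈ Set.Icc (0:ℝ) ℓ, y x * j * (y x)ᴴ = j) ∧
    (∀ᵐ x ∂(volume.restrict (Set.Icc (0:ℝ) ℓ)), ∀ i k,
      HasDerivWithinAt (fun t => y t i k)
        ((Complex.I • (j * V x * y x)) i k) (Set.Icc (0:ℝ) ℓ) x) ∧
    (∀ x ∈ Set.Icc (0:ℝ) (2*ℓ),
      β x = (y (x/2) * Θᴴ).submatrix Sum.inl id ∧
      γ x = (y (x/2) * Θᴴ).submatrix Sum.inr id) := by
  have hΘ : Θ = blockRotation (Fin p) := hΘ
  have hβ : ∀ s ∈ Icc 0 (2 * ℓ), HasMatrixDerivWithinAt β (β' s) (Icc 0 (2 * ℓ)) s :=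
    hβdiff
  have hγ : ∀ s ∈ Icc 0 (2 * ℓ), HasMatrixDerivWithinAt γ (γ' s) (Icc 0 (2 * ℓ)) s :=
    hγdiff
  have hJJ : J * J = 1 := by simp [hJ, fromBlocks_multiply]
  have hJH : Jᴴ = J := by simp [hJ, fromBlocks_conjTranspose]
  replace hy : ∀ x, y x = fromRows (β (2 * x)) (γ (2 * x)) * Θ := fun x => by
    rw [hy, hJ, hΘ, hj, swap_mul_blockRotation_mul_signature]
  have hdouble : MapsTo (2 * ·) (Icc (0 : ℝ) ℓ) (Icc 0 (2 * ℓ)) :=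
    fun x hx => ⟨by linarith [hx.1], by linarith [hx.2]⟩
  refine ⟨?_, fun x hx => ?_, ae_restrict_of_forall_mem measurableSet_Icc fun x hx => ?_,
    fun x hx => ?_⟩
  · rw [hy, mul_zero, hβ0, hγ0, fromRows_smul_fromCols_eq_conjTranspose_blockRotation, hΘ,
      mul_eq_one_comm, blockRotation_mul_conjTranspose]
  · have hΘjΘ : Θ * j * Θᴴ = J := by
      rw [hΘ, hj, hJ, blockRotation_mul_signature_mul_conjTranspose]
    calc y x * j * (y x)ᴴ
        = fromRows (β (2 * x)) (γ (2 * x)) * (Θ * j * Θᴴ)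
            * (fromRows (β (2 * x)) (γ (2 * x)))ᴴ := by
          simp only [hy, conjTranspose_mul, Matrix.mul_assoc]
      _ = j := by
          rw [hΘjΘ, hj, fromRows_mul_mul_conjTranspose_fromRows hJH (hββ _ (hdouble hx))
            (hβγ _ (hdouble hx)) (hγγ _ (hdouble hx))]
  · have hs : 2 * x ∈ Icc (0 : ℝ) (2 * ℓ) := hdouble hx
    have hs' : UniqueDiffWithinAt ℝ (Icc 0 (2 * ℓ)) (2 * x) :=
      uniqueDiffOn_Icc (by linarith) _ hs
    have hder := (hβ _ hs).mul_mul_conjTranspose_eq_zero_of_eqOn J (hγ _ hs) hβγ hs hs'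
    have hdirac := dirac_fromRows hJJ hJH (conjTranspose_mul_sub_conjTranspose_mul_eq hJJ hJH
      (hββ _ hs) (hβγ _ hs) (hγγ _ hs)) (hβ'β _ hs) (hγ'γ _ hs) hder (hv x)
    show HasMatrixDerivWithinAt y _ (Icc 0 ℓ) x
    rw [funext hy]
    convert (((hβ _ hs).fromRows (hγ _ hs)).comp_const_mul 2 hdouble).mul_const Θ using 1
    rw [hV, hj, ← Matrix.mul_assoc, ← Matrix.smul_mul, hdirac]
    norm_num
  · have h : y (x / 2) * Θᴴ = fromRows (β x) (γ x) := by
      rw [hy, mul_div_cancel₀ x two_ne_zero, Matrix.mul_assoc, hΘ,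
        blockRotation_mul_conjTranspose, Matrix.mul_one]
    exact ⟨by ext; simp [h], by ext; simp [h]⟩

/-- **Step 1 (formulas (C40)–(C48)) of the proof of Theorem 4.2 of the paper.**
Let `β, γ : [0,2ℓ] → ℂ^{p×2p}` be differentiable with square-integrable derivatives,
`β(0) = (1/√2)[I_p I_p]`, `γ(0) = (1/√2)[-I_p I_p]`, `βJγ* ≡ 0`, `βJβ* ≡ I_p`,
`γJγ* ≡ -I_p`, `β′Jβ* ≡ 0` and `γ′Jγ* ≡ 0`.  Setting `v(x) = 2iβ′(2x)Jγ(2x)*`,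
`V = [[0,v],[v*,0]]` and `y(x) = [β(2x); γ(2x)]JΘj`, we have `y(0) = I_{2p}`,
`y j y* ≡ j` and `y′ = ijVy` a.e. on `[0,ℓ]`; that is, `y` is the fundamental solution
`u(·,0)` of the Dirac system with potential `v`, and `β(x) = [I_p 0]y(x/2)Θ*`,
`γ(x) = [0 I_p]y(x/2)Θ*`. -/
theorem beta_gamma_generate_dirac_system
    (p : ℕ) (ℓ : ℝ) (hℓ : 0 < ℓ)
    (j J Θ : Matrix (Fin p ⊕ Fin p) (Fin p ⊕ Fin p) ℂ)
    (hj : j = Matrix.fromBlocks 1 0 0 (-1))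
    (hJ : J = Matrix.fromBlocks 0 1 1 0)
    (hΘ : Θ = (((Real.sqrt 2 : ℝ) : ℂ))⁻¹ • Matrix.fromBlocks 1 (-1) 1 1)
    (β β' γ γ' : ℝ → Matrix (Fin p) (Fin p ⊕ Fin p) ℂ)
    (hβdiff : ∀ x ∈ Set.Icc (0:ℝ) (2*ℓ), ∀ i k,
      HasDerivWithinAt (fun y => β y i k) (β' x i k) (Set.Icc (0:ℝ) (2*ℓ)) x)
    (hγdiff : ∀ x ∈ Set.Icc (0:ℝ) (2*ℓ), ∀ i k,
      HasDerivWithinAt (fun y => γ y i k) (γ' x i k) (Set.Icc (0:ℝ) (2*ℓ)) x)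
    (hβ'L2 : ∀ i k, MemLp (fun x => β' x i k) 2 (volume.restrict (Set.Ioc (0:ℝ) (2*ℓ))))
    (hγ'L2 : ∀ i k, MemLp (fun x => γ' x i k) 2 (volume.restrict (Set.Ioc (0:ℝ) (2*ℓ))))
    (hβ0 : β 0 = (((Real.sqrt 2 : ℝ) : ℂ))⁻¹ • Matrix.fromCols 1 1)
    (hγ0 : γ 0 = (((Real.sqrt 2 : ℝ) : ℂ))⁻¹ • Matrix.fromCols (-1) 1)
    (hβγ : ∀ x ∈ Set.Icc (0:ℝ) (2*ℓ), β x * J * (γ x)ᴴ = 0)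
    (hββ : ∀ x ∈ Set.Icc (0:ℝ) (2*ℓ), β x * J * (β x)ᴴ = 1)
    (hγγ : ∀ x ∈ Set.Icc (0:ℝ) (2*ℓ), γ x * J * (γ x)ᴴ = -1)
    (hβ'β : ∀ x ∈ Set.Icc (0:ℝ) (2*ℓ), β' x * J * (β x)ᴴ = 0)
    (hγ'γ : ∀ x ∈ Set.Icc (0:ℝ) (2*ℓ), γ' x * J * (γ x)ᴴ = 0)
    (v : ℝ → Matrix (Fin p) (Fin p) ℂ)
    (hv : ∀ x, v x = ((2 : ℂ) * Complex.I) • (β' (2*x) * J * (γ (2*x))ᴴ))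
    (V : ℝ → Matrix (Fin p ⊕ Fin p) (Fin p ⊕ Fin p) ℂ)
    (hV : ∀ x, V x = Matrix.fromBlocks 0 (v x) ((v x)ᴴ) 0)
    (y : ℝ → Matrix (Fin p ⊕ Fin p) (Fin p ⊕ Fin p) ℂ)
    (hy : ∀ x, y x = Matrix.fromRows (β (2*x)) (γ (2*x)) * (J * Θ * j)) :
    y 0 = 1 ∧
    (∀ x ∈ Set.Icc (0:ℝ) ℓ, y x * j * (y x)ᴴ = j) ∧
    (∀ᵐ x ∂(volume.restrict (Set.Icc (0:ℝ) ℓ)), ∀ i k,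
      HasDerivWithinAt (fun t => y t i k)
        ((Complex.I • (j * V x * y x)) i k) (Set.Icc (0:ℝ) ℓ) x) ∧
    (∀ x ∈ Set.Icc (0:ℝ) (2*ℓ),
      β x = (y (x/2) * Θᴴ).submatrix Sum.inl id ∧
      γ x = (y (x/2) * Θᴴ).submatrix Sum.inr id) :=
  beta_gamma_generate_dirac_system_general p ℓ hℓ j J Θ hj hJ hΘ β β' γ γ' hβdiff hγdiff hβ0 hγ0 hβγ
    hββ hγγ hβ'β hγ'γ v hv V hV y hy
end
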